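/- arXiv:1505.04345 — 5 statements merged into one kernel-verified Lean document; each statement's English description precedes it below -/
import Mathlib

section
/- (Entropy Distribution Principle) Let f: X → X be a continuous transformation of a compact metric space and Z ⊆ X an arbitrary Borel set. Suppose there exist ε > 0 and s ≥ 0 such that one can find a sequence of Borel probability measures μ_k, a constant K > 0, and a weak* limit measure ν of the sequence (μ_k) with ν(Z) > 0, satisfying limsup_{k→∞} μ_k(B_n(x,ε)) ≤ K·exp(−ns) for all sufficiently large n and every dynamical ball B_n(x,ε) having non-empty intersection with Z. Then h^B_top(Z; ε, f) ≥ s. -/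
open Filter MeasureTheory Set Topology Manifold
open scoped ENNReal NNReal

section EntropyDefs

variable {X : Type*} [MetricSpace X]

/-- The open dynamical (Bowen) ball `B_n(x,r) = {y | d_n(x,y) < r}`. -/
def dynBall (f : X → X) (x : X) (n : ℕ) (r : ℝ) : Set X :=
  {y | ∀ i < n, dist (f^[i] x) (f^[i] y) < r}

/-- The closed dynamical (Bowen) ball `{y | d_n(x,y) ≤ r}`. -/
def dynCBall (f : X → X) (x : X) (n : ℕ) (r : ℝ) : Set X :=
  {y | ∀ i < n, dist (f^[i] x) (f^[i] y) ≤ r}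

/-- `S` is an `(n,ε)`-separated subset of `E`. -/
def IsDynSep (f : X → X) (E : Set X) (n : ℕ) (ε : ℝ) (S : Set X) : Prop :=
  S ⊆ E ∧ ∀ x ∈ S, ∀ y ∈ S, x ≠ y → ∃ i < n, ε < dist (f^[i] x) (f^[i] y)

/-- The maximal cardinality `s_n(E,ε)` of an `(n,ε)`-separated subset of `E`. -/
noncomputable def sepCount (f : X → X) (E : Set X) (n : ℕ) (ε : ℝ) : ℕ :=
  sSup {k | ∃ S : Finset X, IsDynSep f E n ε ↑S ∧ S.card = k}

/-- Bowen's separated-set topological entropy of a compact set: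
`lim_{ε→0} limsup_n (1/n) log s_n(E,ε)`. -/
noncomputable def compactEnt (f : X → X) (E : Set X) : EReal :=
  ⨆ (ε : ℝ) (_ : 0 < ε),
    Filter.limsup (fun n : ℕ => ((Real.log (sepCount f E n ε) / n : ℝ) : EReal)) Filter.atTop

/-- Topological entropy of an arbitrary subset `Y`: the supremum over compact `E ⊆ Y`. -/
noncomputable def topEnt (f : X → X) (Y : Set X) : EReal :=
  ⨆ (E : Set X) (_ : IsCompact E) (_ : E ⊆ Y), compactEnt f E

/-- The sum `Σ e^{-t·u}` over a family of Bowen balls recorded as center/order pairs. -/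
noncomputable def bowenSum (t : ℝ) (s : Set (X × ℕ)) : ℝ≥0∞ :=
  ∑' p : s, ENNReal.ofReal (Real.exp (-t * ((p : X × ℕ).2 : ℝ)))

/-- `C(E;t,n,σ,f)`: infimum of `Σ e^{-t·u}` over countable covers of `E` by Bowen
balls `B_u(x,σ)` with `u ≥ n`. -/
noncomputable def bowenCn (f : X → X) (E : Set X) (t : ℝ) (σ : ℝ) (n : ℕ) : ℝ≥0∞ :=
  ⨅ (s : Set (X × ℕ)) (_ : s.Countable) (_ : ∀ p ∈ s, n ≤ p.2)
    (_ : E ⊆ ⋃ p ∈ s, dynBall f p.1 p.2 σ), bowenSum t s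

/-- `C(E;t,σ,f) = lim_{n→∞} C(E;t,n,σ,f)` (the limit of the nondecreasing sequence). -/
noncomputable def bowenC (f : X → X) (E : Set X) (t : ℝ) (σ : ℝ) : ℝ≥0∞ :=
  ⨆ n : ℕ, bowenCn f E t σ n

/-- Bowen–Hausdorff entropy at scale `σ`: `inf {t | C(E;t,σ,f) = 0}`. -/
noncomputable def bowenEntAt (f : X → X) (E : Set X) (σ : ℝ) : EReal :=
  sInf {t : EReal | ∃ t' : ℝ, t = (t' : EReal) ∧ bowenC f E t' σ = 0}

/-- Bowen–Hausdorff entropy `h^B_top(f,E) = lim_{σ→0} h^B_top(E;σ,f)`. -/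
noncomputable def bowenEnt (f : X → X) (E : Set X) : EReal :=
  ⨆ (σ : ℝ) (_ : 0 < σ), bowenEntAt f E σ

/-- Feng–Huang packing pre-measure `P^s_{N,ε}(E)`: supremum of `Σ e^{-s·n_i}` over countable
pairwise disjoint families of closed Bowen balls of orders `n_i ≥ N` centered in `E`. -/
noncomputable def packPre (f : X → X) (s : ℝ) (N : ℕ) (ε : ℝ) (E : Set X) : ℝ≥0∞ :=
  ⨆ (D : Set (X × ℕ)) (_ : D.Countable) (_ : ∀ p ∈ D, p.1 ∈ E ∧ N ≤ p.2)
    (_ : D.Pairwise fun p q => Disjoint (dynCBall f p.1 p.2 ε) (dynCBall f q.1 q.2 ε)),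
    ∑' p : D, ENNReal.ofReal (Real.exp (-s * ((p : X × ℕ).2 : ℝ)))

/-- `P^s_ε(E) = lim_{N→∞} P^s_{N,ε}(E)` (the limit of the nonincreasing sequence). -/
noncomputable def packPreLim (f : X → X) (s ε : ℝ) (E : Set X) : ℝ≥0∞ :=
  ⨅ N : ℕ, packPre f s N ε E

/-- Feng–Huang packing measure `𝒫^s_ε(E) = inf {Σ_i P^s_ε(E_i) | E ⊆ ⋃ E_i}`. -/
noncomputable def packMeas (f : X → X) (s ε : ℝ) (E : Set X) : ℝ≥0∞ :=
  ⨅ (C : ℕ → Set X) (_ : E ⊆ ⋃ i, C i), ∑' i, packPreLim f s ε (C i)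

/-- Packing topological entropy at scale `ε`: the critical exponent of `s ↦ 𝒫^s_ε(E)`. -/
noncomputable def packEntAt (f : X → X) (E : Set X) (ε : ℝ) : EReal :=
  sInf {t : EReal | ∃ t' : ℝ, t = (t' : EReal) ∧ packMeas f t' ε E = 0}

/-- Packing topological entropy `h^P_top(f,E) = lim_{ε→0} h^P_top(f,E,ε)`. -/
noncomputable def packEnt (f : X → X) (E : Set X) : EReal :=
  ⨆ (ε : ℝ) (_ : 0 < ε), packEntAt f E ε

/-- The restriction of `f` to `Λ` is topologically mixing. -/
def TopMixingOn (f : X → X) (Λ : Set X) : Prop :=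
  ∀ U V : Set X, IsOpen U → IsOpen V → (U ∩ Λ).Nonempty → (V ∩ Λ).Nonempty →
    ∃ N : ℕ, ∀ n ≥ N, (f^[n] '' (U ∩ Λ) ∩ (V ∩ Λ)).Nonempty

end EntropyDefs

/-!
Mass distribution: if `ν` gives every Bowen ball `B_u(x,ε)` of large order meeting `Z` mass at
most `C e^{-tu}`, then every admissible cover of `Z` has `Σ e^{-tu} ≥ ν(Z)/C`, so `C(Z;t,ε,f) > 0`.
The bound on `ν` comes from the one on the `μ_k` because Bowen balls are open, and the open-set
half of the portmanteau theorem gives `ν(U) ≤ liminf_k μ_{φ k}(U) ≤ limsup_k μ_k(U)`.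
For `t < s` the factor `e^{-us} = e^{-tu} e^{(t-s)u}` is then at most `e^{(t-s)N} e^{-tu}`.
-/

section BowenBalls

variable {X : Type*} [MetricSpace X] {f : X → X}

theorem isOpen_dynBall (hf : Continuous f) (x : X) (n : ℕ) (r : ℝ) :
    IsOpen (dynBall f x n r) := by
  have h : dynBall f x n r = ⋂ i ∈ Finset.range n, f^[i] ⁻¹' Metric.ball (f^[i] x) r := by
    ext y
    simp [dynBall, Metric.mem_ball, dist_comm]
  rw [h]
  exact isOpen_biInter_finset fun i _ => Metric.isOpen_ball.preimage (hf.iterate i)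

theorem bowenCn_le_bowenC (E : Set X) (t σ : ℝ) (n : ℕ) :
    bowenCn f E t σ n ≤ bowenC f E t σ :=
  le_iSup (bowenCn f E t σ) n

theorem le_bowenEntAt_of_bowenC_ne_zero {E : Set X} {σ s : ℝ}
    (h : ∀ t : ℝ, t < s → bowenC f E t σ ≠ 0) : (s : EReal) ≤ bowenEntAt f E σ := by
  refine le_sInf ?_
  rintro _ ⟨t, rfl, ht⟩
  exact EReal.coe_le_coe_iff.2 (not_lt.1 fun hts => h t hts ht)

variable [MeasurableSpace X] {ν : Measure X} {E : Set X} {t σ : ℝ} {N : ℕ} {C : ℝ≥0∞}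

theorem measure_le_mul_bowenSum
    (hball : ∀ x n, N ≤ n → (dynBall f x n σ ∩ E).Nonempty →
      ν (dynBall f x n σ) ≤ C * ENNReal.ofReal (Real.exp (-t * n)))
    {cov : Set (X × ℕ)} (hcount : cov.Countable) (horder : ∀ p ∈ cov, N ≤ p.2)
    (hcover : E ⊆ ⋃ p ∈ cov, dynBall f p.1 p.2 σ) :
    ν E ≤ C * bowenSum t cov := by
  set cov' : Set (X × ℕ) := {p ∈ cov | (dynBall f p.1 p.2 σ ∩ E).Nonempty}
  have hsub : cov' ⊆ cov := fun p hp => hp.1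
  have hcover' : E ⊆ ⋃ p ∈ cov', dynBall f p.1 p.2 σ := by
    intro z hz
    obtain ⟨p, hp, hzp⟩ := mem_iUnion₂.1 (hcover hz)
    exact mem_iUnion₂.2 ⟨p, ⟨hp, z, hzp, hz⟩, hzp⟩
  calc ν E ≤ ∑' p : cov', ν (dynBall f (p : X × ℕ).1 (p : X × ℕ).2 σ) :=
        (measure_mono hcover').trans (measure_biUnion_le _ (hcount.mono hsub) _)
    _ ≤ ∑' p : cov', C * ENNReal.ofReal (Real.exp (-t * (p : X × ℕ).2)) :=
        ENNReal.tsum_le_tsum fun p => hball _ _ (horder _ (hsub p.2)) p.2.2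
    _ = C * bowenSum t cov' := ENNReal.tsum_mul_left
    _ ≤ C * bowenSum t cov := by
        gcongr
        exact ENNReal.summable.tsum_le_tsum_of_inj (Set.inclusion hsub)
          (Set.inclusion_injective hsub) (fun _ _ => zero_le) (fun _ => le_rfl) ENNReal.summable

theorem measure_div_le_bowenCn
    (hball : ∀ x n, N ≤ n → (dynBall f x n σ ∩ E).Nonempty →
      ν (dynBall f x n σ) ≤ C * ENNReal.ofReal (Real.exp (-t * n))) :
    ν E / C ≤ bowenCn f E t σ N :=
  le_iInf₂ fun _ hcount => le_iInf₂ fun horder hcover =>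
    ENNReal.div_le_of_le_mul' (measure_le_mul_bowenSum hball hcount horder hcover)

end BowenBalls

theorem ProbabilityMeasure.measure_le_limsup_of_tendsto_comp {Ω : Type*} [MeasurableSpace Ω]
    [TopologicalSpace Ω] [OpensMeasurableSpace Ω] [HasOuterApproxClosed Ω]
    {μ : ℕ → ProbabilityMeasure Ω} {ν : ProbabilityMeasure Ω} {φ : ℕ → ℕ} (hφ : StrictMono φ)
    (hlim : Tendsto (fun k => μ (φ k)) atTop (𝓝 ν)) {U : Set Ω} (hU : IsOpen U) :
    (ν : Measure Ω) U ≤ limsup (fun k => (μ k : Measure Ω) U) atTop :=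
  calc (ν : Measure Ω) U ≤ liminf (fun k => (μ (φ k) : Measure Ω) U) atTop :=
        ProbabilityMeasure.le_liminf_measure_open_of_tendsto hlim hU
    _ ≤ limsup (fun k => (μ (φ k) : Measure Ω) U) atTop := liminf_le_limsup
    _ ≤ limsup (fun k => (μ k : Measure Ω) U) atTop := by
        show limsup ((fun k => (μ k : Measure Ω) U) ∘ φ) atTop ≤ _
        rw [limsup_comp]
        exact limsup_le_limsup_of_le hφ.tendsto_atTop

theorem ENNReal.ofReal_mul_exp_le {K s t : ℝ} {N n : ℕ} (hts : t ≤ s) (hn : N ≤ n) :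
    ENNReal.ofReal (K * Real.exp (-n * s))
      ≤ ENNReal.ofReal (K * Real.exp ((t - s) * N)) * ENNReal.ofReal (Real.exp (-t * n)) := by
  have hsplit : K * Real.exp (-n * s)
      = K * Real.exp ((t - s) * N) * Real.exp (-t * n) * Real.exp ((t - s) * (n - N)) := by
    simp only [mul_assoc, ← Real.exp_add]
    ring_nf
  have hsmall : Real.exp ((t - s) * (n - N)) ≤ 1 :=
    Real.exp_le_one_iff.2 (mul_nonpos_of_nonpos_of_nonneg (by linarith)
      (sub_nonneg.2 (Nat.cast_le.2 hn)))
  calc ENNReal.ofReal (K * Real.exp (-n * s))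
      = ENNReal.ofReal (K * Real.exp ((t - s) * N) * Real.exp (-t * n))
          * ENNReal.ofReal (Real.exp ((t - s) * (n - N))) := by
        rw [hsplit, ENNReal.ofReal_mul' (Real.exp_pos _).le]
    _ ≤ ENNReal.ofReal (K * Real.exp ((t - s) * N) * Real.exp (-t * n)) :=
        mul_le_of_le_one_right' (ENNReal.ofReal_le_one.2 hsmall)
    _ = _ := ENNReal.ofReal_mul' (Real.exp_pos _).le

theorem entropy_distribution_principle_general
    {X : Type*} [MetricSpace X] [MeasurableSpace X] [BorelSpace X]
    (f : X → X) (hf : Continuous f) (Z : Set X)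
    (ε s : ℝ)
    (μ : ℕ → ProbabilityMeasure X) (K : ℝ)
    (ν : ProbabilityMeasure X)
    (hlim : ∃ φ : ℕ → ℕ, StrictMono φ ∧ Tendsto (fun k => μ (φ k)) atTop (𝓝 ν))
    (hνZ : 0 < (ν : Measure X) Z)
    (hball : ∃ N : ℕ, ∀ n ≥ N, ∀ x : X, (dynBall f x n ε ∩ Z).Nonempty →
      Filter.limsup (fun k : ℕ => (μ k : Measure X) (dynBall f x n ε)) Filter.atTop
        ≤ ENNReal.ofReal (K * Real.exp (-(n : ℝ) * s))) :
    (s : EReal) ≤ bowenEntAt f Z ε := by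
  obtain ⟨φ, hφ, hconv⟩ := hlim
  obtain ⟨N, hN⟩ := hball
  refine le_bowenEntAt_of_bowenC_ne_zero fun t hts hC => hνZ.ne' ?_
  have hmass : (ν : Measure X) Z / ENNReal.ofReal (K * Real.exp ((t - s) * N)) = 0 := by
    refine nonpos_iff_eq_zero.1 (hC ▸ (measure_div_le_bowenCn ?_).trans
      (bowenCn_le_bowenC Z t ε N))
    intro x n hn hne
    calc (ν : Measure X) (dynBall f x n ε)
        ≤ limsup (fun k => (μ k : Measure X) (dynBall f x n ε)) atTop :=
          ProbabilityMeasure.measure_le_limsup_of_tendsto_comp hφ hconv (isOpen_dynBall hf x n ε)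
      _ ≤ _ := hN n hn x hne
      _ ≤ _ := ENNReal.ofReal_mul_exp_le hts.le hn
  simpa using hmass

/-- **Entropy Distribution Principle.** Let `f : X → X` be a continuous map of a compact metric
space and `Z ⊆ X` a Borel set. Suppose for some `ε > 0` and `s ≥ 0` there are Borel probability
measures `μ_k`, a constant `K > 0` and a weak* limit measure `ν` of the sequence `(μ_k)` with
`ν(Z) > 0`, such that `limsup_k μ_k(B_n(x,ε)) ≤ K e^{-ns}` for all sufficiently large `n` and
every dynamical ball `B_n(x,ε)` meeting `Z`. Then `h^B_top(Z; ε, f) ≥ s`. -/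
theorem entropy_distribution_principle
    {X : Type*} [MetricSpace X] [CompactSpace X] [MeasurableSpace X] [BorelSpace X]
    (f : X → X) (hf : Continuous f) (Z : Set X) (hZ : MeasurableSet Z)
    (ε s : ℝ) (hε : 0 < ε) (hs : 0 ≤ s)
    (μ : ℕ → ProbabilityMeasure X) (K : ℝ) (hK : 0 < K)
    (ν : ProbabilityMeasure X)
    (hlim : ∃ φ : ℕ → ℕ, StrictMono φ ∧ Tendsto (fun k => μ (φ k)) atTop (𝓝 ν))
    (hνZ : 0 < (ν : Measure X) Z)
    (hball : ∃ N : ℕ, ∀ n ≥ N, ∀ x : X, (dynBall f x n ε ∩ Z).Nonempty →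
      Filter.limsup (fun k : ℕ => (μ k : Measure X) (dynBall f x n ε)) Filter.atTop
        ≤ ENNReal.ofReal (K * Real.exp (-(n : ℝ) * s))) :
    (s : EReal) ≤ bowenEntAt f Z ε :=
  entropy_distribution_principle_general f hf Z ε s μ K ν hlim hνZ hball
end

section
/- Let (X,d) be a compact metric space, f: X → X a homeomorphism, μ an ergodic f-invariant Borel probability measure, and Γ ⊆ X a measurable set with μ(Γ) > 0. Let δ > 0 and let ξ be a finite measurable partition of X with diam ξ < δ which refines {Γ, X∖Γ}. For ρ > 0 and a positive integer s, define Γ_{s,ρ} = { x ∈ Γ : for every l ≥ s there exists m ∈ [l, (1+ρ)l] with f^m(x) ∈ ξ(x) }, where ξ(x) is the element of ξ containing x. Then lim_{s→∞} μ(Γ_{s,ρ}) = μ(Γ). -/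
open Filter MeasureTheory Set Topology Manifold
open scoped ENNReal NNReal

/-!
If `∫ g < 0`, the Birkhoff sums of `g` are almost everywhere bounded above: boundedness is an
exactly invariant event, so by ergodicity it is null or conull, and if it were null the maximal
ergodic theorem would give `∫ g ≥ 0`. Applied to `1_C - c` and `c - 1_C`, this shows that for
`a < μ(C) < b` the number of visits of the orbit of almost every point to `C` before time `n` lies
eventually between `a n` and `b n`. With `b = (1 + ρ) a`, the count at time `⌊(1 + ρ) l⌋ + 1`
exceeds the count at time `l`, so the orbit visits `C` in between. Taking for `C` the cell of the
point itself, which has positive measure for almost every point, the sets `Γ_{s,ρ}` increase to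
`Γ` up to a null set.
-/

section Birkhoff

variable {α : Type*} {f : α → α} {g : α → ℝ}

theorem birkhoffSum_le_birkhoffSum_abs {m n : ℕ} (h : m ≤ n) (x : α) :
    birkhoffSum f g m x ≤ birkhoffSum f (fun y => |g y|) n x :=
  calc birkhoffSum f g m x ≤ birkhoffSum f (fun y => |g y|) m x :=
        Finset.sum_le_sum fun _ _ => le_abs_self _
    _ ≤ birkhoffSum f (fun y => |g y|) n x :=
        Finset.sum_le_sum_of_subset_of_nonneg (Finset.range_mono h) fun _ _ _ => abs_nonneg _

noncomputable def birkhoffMax (f : α → α) (g : α → ℝ) (N : ℕ) (x : α) : ℝ :=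
  (Finset.range (N + 1)).sup' Finset.nonempty_range_add_one fun n => birkhoffSum f g n x

theorem birkhoffMax_le_iff {N : ℕ} {x : α} {c : ℝ} :
    birkhoffMax f g N x ≤ c ↔ ∀ n ≤ N, birkhoffSum f g n x ≤ c := by
  simp [birkhoffMax, Finset.sup'_le_iff]

theorem birkhoffSum_le_birkhoffMax {n N : ℕ} (h : n ≤ N) (x : α) :
    birkhoffSum f g n x ≤ birkhoffMax f g N x :=
  birkhoffMax_le_iff.1 le_rfl n h

theorem birkhoffMax_nonneg (N : ℕ) (x : α) : 0 ≤ birkhoffMax f g N x := by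
  simpa using birkhoffSum_le_birkhoffMax (f := f) (g := g) N.zero_le x

theorem monotone_birkhoffMax (x : α) : Monotone fun N => birkhoffMax f g N x :=
  fun _ _ h => birkhoffMax_le_iff.2 fun _ hn => birkhoffSum_le_birkhoffMax (hn.trans h) x

theorem birkhoffMax_le_add_birkhoffMax_apply {N : ℕ} {x : α} (hx : 0 < birkhoffMax f g N x) :
    birkhoffMax f g N x ≤ g x + birkhoffMax f g N (f x) := by
  have h : birkhoffMax f g N x ≤ max 0 (g x + birkhoffMax f g N (f x)) := by
    refine birkhoffMax_le_iff.2 fun n hn => ?_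
    rcases n with _ | n
    · simp
    · rw [birkhoffSum_succ']
      refine le_max_of_le_right ?_
      gcongr
      exact birkhoffSum_le_birkhoffMax (by omega) _
  exact (le_max_iff.1 h).resolve_left hx.not_ge

theorem bddAbove_range_birkhoffSum_apply_iff {x : α} :
    BddAbove (range fun n => birkhoffSum f g n (f x)) ↔
      BddAbove (range fun n => birkhoffSum f g n x) := by
  simp only [bddAbove_def, forall_mem_range]
  constructor
  · rintro ⟨K, hK⟩
    refine ⟨max 0 (g x + K), fun n => ?_⟩
    rcases n with _ | n
    · simp
    · rw [birkhoffSum_succ']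
      exact le_max_of_le_right (by linarith [hK n])
  · rintro ⟨K, hK⟩
    exact ⟨K - g x, fun n => by linarith [hK (n + 1), birkhoffSum_succ' f g n x]⟩

theorem exists_iterate_mem_Ico_of_birkhoffSum_indicator_lt {s : Set α} {l n : ℕ} {x : α}
    (hln : l ≤ n)
    (h : birkhoffSum f (s.indicator 1) l x < birkhoffSum f (s.indicator (1 : α → ℝ)) n x) :
    ∃ m ∈ Ico l n, f^[m] x ∈ s := by
  obtain ⟨d, rfl⟩ := Nat.exists_eq_add_of_le hln
  rw [birkhoffSum_add] at h
  have hpos : 0 < birkhoffSum f (s.indicator (1 : α → ℝ)) d (f^[l] x) := by linarith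
  obtain ⟨k, hk, hne⟩ := Finset.exists_ne_zero_of_sum_ne_zero hpos.ne'
  refine ⟨k + l, ⟨by omega, by simp at hk; omega⟩, ?_⟩
  rw [Function.iterate_add_apply]
  exact mem_of_indicator_ne_zero hne

variable [MeasurableSpace α] {μ : Measure α}

theorem measurable_birkhoffSum (hf : Measurable f) (hg : Measurable g) (n : ℕ) :
    Measurable (birkhoffSum f g n) :=
  Finset.measurable_sum _ fun k _ => hg.comp (hf.iterate k)

theorem integrable_birkhoffSum (hf : MeasurePreserving f μ μ) (hg : Integrable g μ) (n : ℕ) :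
    Integrable (birkhoffSum f g n) μ :=
  integrable_finsetSum _ fun k _ => (hf.iterate k).integrable_comp_of_integrable hg

theorem measurable_birkhoffMax (hf : Measurable f) (hg : Measurable g) (N : ℕ) :
    Measurable (birkhoffMax f g N) :=
  Finset.measurable_range_sup'' fun n _ => measurable_birkhoffSum hf hg n

theorem integrable_birkhoffMax (hf : MeasurePreserving f μ μ) (hgm : Measurable g)
    (hgi : Integrable g μ) (N : ℕ) : Integrable (birkhoffMax f g N) μ := by
  refine (integrable_birkhoffSum hf hgi.abs N).mono'
    (measurable_birkhoffMax hf.measurable hgm N).aestronglyMeasurable (ae_of_all _ fun x => ?_)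
  rw [Real.norm_of_nonneg (birkhoffMax_nonneg N x)]
  exact birkhoffMax_le_iff.2 fun n hn => birkhoffSum_le_birkhoffSum_abs hn x

/-- Garsia: `g ≥ M_N - M_N ∘ f` on `{M_N > 0}`, and `M_N ∘ f` has the same integral as `M_N`. -/
theorem setIntegral_birkhoffMax_pos_nonneg (hf : MeasurePreserving f μ μ) (hgm : Measurable g)
    (hgi : Integrable g μ) (N : ℕ) :
    0 ≤ ∫ x in {x | 0 < birkhoffMax f g N x}, g x ∂μ := by
  set M := birkhoffMax f g N
  set A := {x | 0 < M x}
  have hMm : Measurable M := measurable_birkhoffMax hf.measurable hgm N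
  have hMi : Integrable M μ := integrable_birkhoffMax hf hgm hgi N
  have hMfi : Integrable (M ∘ f) μ := hf.integrable_comp_of_integrable hMi
  have hAm : MeasurableSet A := measurableSet_lt measurable_const hMm
  have hMA : ∫ x in A, M x ∂μ = ∫ x, M x ∂μ :=
    setIntegral_eq_integral_of_forall_compl_eq_zero fun x hx =>
      le_antisymm (not_lt.1 hx) (birkhoffMax_nonneg N x)
  have hMf : ∫ x, M (f x) ∂μ = ∫ x, M x ∂μ := by
    rw [← integral_map hf.aemeasurable (by rw [hf.map_eq]; exact hMm.aestronglyMeasurable),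
      hf.map_eq]
  have hMfA : ∫ x in A, M (f x) ∂μ ≤ ∫ x, M (f x) ∂μ :=
    setIntegral_le_integral hMfi (ae_of_all _ fun x => birkhoffMax_nonneg N (f x))
  calc (0 : ℝ) ≤ ∫ x in A, M x ∂μ - ∫ x in A, M (f x) ∂μ := by linarith
    _ = ∫ x in A, (M x - M (f x)) ∂μ := (integral_sub hMi.integrableOn hMfi.integrableOn).symm
    _ ≤ ∫ x in A, g x ∂μ := setIntegral_mono_on (hMi.sub hMfi).integrableOn hgi.integrableOn hAm
        fun x hx => by linarith [birkhoffMax_le_add_birkhoffMax_apply (f := f) hx]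

theorem integral_nonneg_of_ae_exists_birkhoffSum_pos (hf : MeasurePreserving f μ μ)
    (hgm : Measurable g) (hgi : Integrable g μ) (h : ∀ᵐ x ∂μ, ∃ n, 0 < birkhoffSum f g n x) :
    0 ≤ ∫ x, g x ∂μ := by
  set A : ℕ → Set α := fun N => {x | 0 < birkhoffMax f g N x}
  have hAm : ∀ N, MeasurableSet (A N) := fun N =>
    measurableSet_lt measurable_const (measurable_birkhoffMax hf.measurable hgm N)
  have hAmono : Monotone A := fun _ _ hNM x hx => hx.trans_le (monotone_birkhoffMax x hNM)
  have hAuniv : ⋃ N, A N =ᵐ[μ] (univ : Set α) := by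
    refine ae_eq_univ.2 (mem_ae_iff.1 ?_)
    filter_upwards [h] with x ⟨n, hn⟩
    exact mem_iUnion.2 ⟨n, hn.trans_le (birkhoffSum_le_birkhoffMax le_rfl x)⟩
  have hlim := tendsto_setIntegral_of_monotone hAm hAmono hgi.integrableOn
  rw [setIntegral_congr_set hAuniv, setIntegral_univ] at hlim
  exact ge_of_tendsto' hlim fun N => setIntegral_birkhoffMax_pos_nonneg hf hgm hgi N

end Birkhoff

namespace Ergodic

variable {α : Type*} [MeasurableSpace α] {μ : Measure α} {f : α → α} {g : α → ℝ}

theorem ae_bddAbove_birkhoffSum (hf : Ergodic f μ) (hgm : Measurable g) (hgi : Integrable g μ)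
    (hg : ∫ x, g x ∂μ < 0) : ∀ᵐ x ∂μ, BddAbove (range fun n => birkhoffSum f g n x) := by
  set B := {x | BddAbove (range fun n => birkhoffSum f g n x)}
  have hBm : MeasurableSet B :=
    measurableSet_bddAbove_range fun n => measurable_birkhoffSum hf.measurable hgm n
  have hBinv : f ⁻¹' B = B := ext fun _ => bddAbove_range_birkhoffSum_apply_iff
  rcases hf.measure_self_or_compl_eq_zero hBm hBinv with hB | hB
  · have hpos : ∀ᵐ x ∂μ, ∃ n, 0 < birkhoffSum f g n x := by
      filter_upwards [measure_eq_zero_iff_ae_notMem.1 hB] with x hx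
      obtain ⟨_, ⟨n, rfl⟩, hn⟩ := not_bddAbove_iff.1 hx 0
      exact ⟨n, hn⟩
    exact absurd (integral_nonneg_of_ae_exists_birkhoffSum_pos hf.toMeasurePreserving hgm hgi
      hpos) hg.not_ge
  · exact hB

theorem ae_eventually_birkhoffSum_lt [IsProbabilityMeasure μ] (hf : Ergodic f μ)
    (hgm : Measurable g) (hgi : Integrable g μ) {b : ℝ} (hb : ∫ x, g x ∂μ < b) :
    ∀ᵐ x ∂μ, ∀ᶠ n : ℕ in atTop, birkhoffSum f g n x < b * n := by
  obtain ⟨c, hgc, hcb⟩ := exists_between hb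
  set φ : α → ℝ := g - fun _ => c
  have hsub : ∀ n x, birkhoffSum f φ n x = birkhoffSum f g n x - n * c := by
    intro n x
    rw [birkhoffSum_sub, birkhoffSum_of_comp_eq (φ := fun _ => c) rfl]
    simp
  have hneg : ∫ x, φ x ∂μ < 0 := by
    change ∫ x, (g x - c) ∂μ < 0
    rw [integral_sub hgi (integrable_const c), integral_const, probReal_univ, one_smul]
    linarith
  filter_upwards [hf.ae_bddAbove_birkhoffSum (hgm.sub measurable_const)
    (hgi.sub (integrable_const c)) hneg] with x ⟨K, hK⟩
  have hK' : ∀ n : ℕ, birkhoffSum f g n x - n * c ≤ K := fun n => hsub n x ▸ hK ⟨n, rfl⟩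
  filter_upwards [(tendsto_natCast_atTop_atTop.const_mul_atTop
    (show 0 < b - c by linarith)).eventually_gt_atTop K] with n hn
  linarith [hK' n]

theorem ae_eventually_lt_birkhoffSum [IsProbabilityMeasure μ] (hf : Ergodic f μ)
    (hgm : Measurable g) (hgi : Integrable g μ) {b : ℝ} (hb : b < ∫ x, g x ∂μ) :
    ∀ᵐ x ∂μ, ∀ᶠ n : ℕ in atTop, b * n < birkhoffSum f g n x := by
  have hneg : ∫ x, (-g) x ∂μ < -b := by
    simpa only [Pi.neg_apply, integral_neg, neg_lt_neg_iff] using hb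
  filter_upwards [hf.ae_eventually_birkhoffSum_lt hgm.neg hgi.neg hneg] with x hx
  filter_upwards [hx] with n hn
  rw [birkhoffSum_neg] at hn
  linarith

theorem ae_eventually_exists_iterate_mem [IsProbabilityMeasure μ] (hf : Ergodic f μ) {s : Set α}
    (hs : MeasurableSet s) (hμs : μ s ≠ 0) {ρ : ℝ} (hρ : 0 < ρ) :
    ∀ᵐ x ∂μ, ∀ᶠ l : ℕ in atTop, ∃ m : ℕ, l ≤ m ∧ (m : ℝ) ≤ (1 + ρ) * l ∧ f^[m] x ∈ s := by
  set g : α → ℝ := s.indicator 1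
  have hgm : Measurable g := measurable_const.indicator hs
  have hgi : Integrable g μ := (integrable_const 1).indicator hs
  have hc : 0 < μ.real s := ENNReal.toReal_pos hμs (measure_ne_top μ s)
  set a := μ.real s / (1 + ρ / 2)
  have ha : 0 < a := by positivity
  have hac : a < ∫ x, g x ∂μ := by
    rw [integral_indicator_one hs]
    exact div_lt_self hc (by linarith)
  have hca : ∫ x, g x ∂μ < a * (1 + ρ) := by
    rw [integral_indicator_one hs, div_mul_eq_mul_div, lt_div_iff₀ (by positivity)]
    nlinarith
  set n : ℕ → ℕ := fun l => ⌊(1 + ρ) * (l : ℝ)⌋₊ + 1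
  have hln : ∀ l : ℕ, l ≤ ⌊(1 + ρ) * (l : ℝ)⌋₊ := fun l =>
    Nat.le_floor (by nlinarith [l.cast_nonneg (α := ℝ)])
  have hn : Tendsto n atTop atTop :=
    tendsto_atTop_mono (fun l => (hln l).trans (Nat.le_succ _)) tendsto_id
  filter_upwards [hf.ae_eventually_birkhoffSum_lt hgm hgi hca,
    hf.ae_eventually_lt_birkhoffSum hgm hgi hac] with x hup hlow
  filter_upwards [hup, hn.eventually hlow] with l hl hnl
  have hlt : birkhoffSum f g l x < birkhoffSum f g (n l) x :=
    calc birkhoffSum f g l x < a * (1 + ρ) * l := hl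
      _ ≤ a * (n l) := by
        rw [mul_assoc]
        gcongr
        push_cast [n]
        exact (Nat.lt_floor_add_one _).le
      _ < birkhoffSum f g (n l) x := hnl
  obtain ⟨m, ⟨hlm, hmn⟩, hm⟩ :=
    exists_iterate_mem_Ico_of_birkhoffSum_indicator_lt ((hln l).trans (Nat.le_succ _)) hlt
  refine ⟨m, hlm, ?_, hm⟩
  have hm' : m ≤ ⌊(1 + ρ) * (l : ℝ)⌋₊ := by omega
  exact (Nat.cast_le.2 hm').trans (Nat.floor_le (by positivity))

theorem ae_eventually_exists_iterate_mem_fiber [IsProbabilityMeasure μ] {β : Type*}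
    [MeasurableSpace β] [MeasurableSingletonClass β] [Countable β] (hf : Ergodic f μ)
    {P : α → β} (hP : Measurable P) {ρ : ℝ} (hρ : 0 < ρ) :
    ∀ᵐ x ∂μ, ∀ᶠ l : ℕ in atTop, ∃ m : ℕ, l ≤ m ∧ (m : ℝ) ≤ (1 + ρ) * l ∧ P (f^[m] x) = P x := by
  have hfiber : ∀ᵐ x ∂μ, μ (P ⁻¹' {P x}) ≠ 0 := by
    have : ∀ᵐ y ∂μ.map P, μ.map P {y} ≠ 0 := ae_iff_of_countable.2 fun _ h => h
    filter_upwards [ae_of_ae_map hP.aemeasurable this] with x hx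
    rwa [Measure.map_apply hP (measurableSet_singleton _)] at hx
  have hrec : ∀ᵐ x ∂μ, ∀ y, μ (P ⁻¹' {y}) ≠ 0 → ∀ᶠ l : ℕ in atTop,
      ∃ m : ℕ, l ≤ m ∧ (m : ℝ) ≤ (1 + ρ) * l ∧ f^[m] x ∈ P ⁻¹' {y} := by
    refine ae_all_iff.2 fun y => ?_
    by_cases hy : μ (P ⁻¹' {y}) = 0
    · exact ae_of_all _ fun _ h => absurd hy h
    · filter_upwards [hf.ae_eventually_exists_iterate_mem (hP (measurableSet_singleton y)) hy hρ]
        with x hx _ using hx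
  filter_upwards [hfiber, hrec] with x hx hrec
  exact hrec (P x) hx

end Ergodic

theorem recurrence_to_partition_element_general
    {X : Type*} [MetricSpace X] [MeasurableSpace X]
    (f : X ≃ₜ X) (μ : Measure X) [IsProbabilityMeasure μ] (hErg : Ergodic (⇑f) μ)
    (Γ : Set X) {k : ℕ} (P : X → Fin k) (hP : Measurable P)
    (ρ : ℝ) (hρ : 0 < ρ) :
    Tendsto
      (fun s : ℕ => μ {x ∈ Γ | ∀ l ≥ s, ∃ m : ℕ, l ≤ m ∧ (m : ℝ) ≤ (1 + ρ) * (l : ℝ) ∧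
        P ((⇑f)^[m] x) = P x})
      atTop (𝓝 (μ Γ)) := by
  set Γs : ℕ → Set X := fun s => {x ∈ Γ | ∀ l ≥ s, ∃ m : ℕ, l ≤ m ∧
    (m : ℝ) ≤ (1 + ρ) * (l : ℝ) ∧ P ((⇑f)^[m] x) = P x}
  have hmono : Monotone Γs := fun s t hst x hx => ⟨hx.1, fun l hl => hx.2 l (hst.trans hl)⟩
  have hunion : ⋃ s, Γs s =ᵐ[μ] Γ := by
    refine (iUnion_subset fun s x hx => hx.1 : ⋃ s, Γs s ⊆ Γ).eventuallyLE.antisymm ?_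
    filter_upwards [hErg.ae_eventually_exists_iterate_mem_fiber hP hρ] with x hx hxΓ
    obtain ⟨s, hs⟩ := eventually_atTop.1 hx
    exact mem_iUnion.2 ⟨s, hxΓ, hs⟩
  rw [← measure_congr hunion]
  exact tendsto_measure_iUnion_atTop hmono

/-- **Lemma 2.8.** Let `μ` be an ergodic invariant measure of the homeomorphism `f` of a compact
metric space, `Γ` a measurable set with `μ(Γ) > 0`, and `ξ` a finite measurable partition
(encoded by a measurable map `P : X → Fin k`) with `diam ξ < δ` refining `{Γ, X∖Γ}`. For
`ρ > 0` and `s ∈ ℕ`, let `Γ_{s,ρ} = {x ∈ Γ | ∀ l ≥ s, ∃ m ∈ [l,(1+ρ)l], f^m(x) ∈ ξ(x)}`.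
Then `μ(Γ_{s,ρ}) → μ(Γ)` as `s → ∞`. -/
theorem recurrence_to_partition_element
    {X : Type*} [MetricSpace X] [CompactSpace X] [MeasurableSpace X] [BorelSpace X]
    (f : X ≃ₜ X) (μ : Measure X) [IsProbabilityMeasure μ] (hErg : Ergodic (⇑f) μ)
    (Γ : Set X) (hΓm : MeasurableSet Γ) (hΓ : 0 < μ Γ)
    (δ : ℝ) (hδ : 0 < δ) {k : ℕ} (P : X → Fin k) (hP : Measurable P)
    (hdiam : ∀ i : Fin k, Metric.diam (P ⁻¹' {i}) < δ)
    (href : ∀ i : Fin k, P ⁻¹' {i} ⊆ Γ ∨ P ⁻¹' {i} ⊆ Γᶜ)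
    (ρ : ℝ) (hρ : 0 < ρ) :
    Tendsto
      (fun s : ℕ => μ {x ∈ Γ | ∀ l ≥ s, ∃ m : ℕ, l ≤ m ∧ (m : ℝ) ≤ (1 + ρ) * (l : ℝ) ∧
        P ((⇑f)^[m] x) = P x})
      atTop (𝓝 (μ Γ)) :=
  recurrence_to_partition_element_general f μ hErg Γ P hP ρ hρ
end

section
/- Let (X,d) be a compact metric space, f: X → X a homeomorphism, μ an ergodic f-invariant Borel probability measure, and Δ ⊆ X a measurable set with μ(Δ) > 0. For ρ > 0 and a positive integer s, define Δ_{s,ρ} = { x ∈ Δ : for every l ≥ s there exists m ∈ [l, (1+ρ)l] with f^m(x) ∈ Δ }. Then lim_{s→∞} μ(Δ_{s,ρ}) = μ(Δ). -/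
/-!
Birkhoff's theorem for `[0, 1]`-valued observables `φ` follows from the Katznelson–Weiss argument.
The limsup of the Birkhoff averages is invariant, hence a.e. equal to a constant `G`. If
`G > η > ∫ φ`, almost every point starts a block on which the Birkhoff sum is at least `η` times
its length. Truncating block lengths at `M` and raising `φ` to `η` on the set of small measure `ε`
where no block of length `≤ M` starts, every orbit segment of length `N` splits into blocks and a
tail shorter than `M`; integrating gives `η (N - M) ≤ N (∫ φ + η ε)`, so `η ≤ ∫ φ`.

Applied to the indicator of `Δ`, a typical point visits `Δ` with frequency `μ Δ > 0`. A window
`[l, (1 + ρ) l]` without visits would leave the number of visits unchanged while time grows by the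
factor `1 + ρ`, which is impossible once the frequencies at both ends are close enough to `μ Δ`.
-/

open Filter MeasureTheory Set Topology

lemma limsup_add_of_tendsto_zero {ι : Type*} {F : Filter ι} [F.NeBot] {u w : ι → ℝ}
    (hu : IsBoundedUnder (· ≤ ·) F u) (hu' : IsBoundedUnder (· ≥ ·) F u)
    (hw : Tendsto w F (𝓝 0)) : limsup (u + w) F = limsup u F := by
  refine le_antisymm ?_ ?_
  · calc limsup (u + w) F ≤ limsup u F + limsup w F :=
          limsup_add_le hu' hu hw.isBoundedUnder_ge.isCoboundedUnder_le hw.isBoundedUnder_le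
      _ = limsup u F := by rw [hw.limsup_eq, add_zero]
  · calc limsup u F = limsup u F + liminf w F := by rw [hw.liminf_eq, add_zero]
      _ ≤ limsup (u + w) F :=
          le_limsup_add hu hu'.isCoboundedUnder_le hw.isBoundedUnder_le hw.isBoundedUnder_ge

section Birkhoff

variable {α : Type*} {T : α → α}

lemma birkhoffAverage_nonneg {g : α → ℝ} (hg : ∀ x, 0 ≤ g x) (n : ℕ) (x : α) :
    0 ≤ birkhoffAverage ℝ T g n x :=
  smul_nonneg (inv_nonneg.2 n.cast_nonneg) (Finset.sum_nonneg fun _ _ => hg _)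

lemma birkhoffAverage_le_one {g : α → ℝ} (hg : ∀ x, g x ≤ 1) (n : ℕ) (x : α) :
    birkhoffAverage ℝ T g n x ≤ 1 := by
  rcases n.eq_zero_or_pos with rfl | hn
  · simp
  · have hsum : birkhoffSum T g n x ≤ n := by
      simpa [birkhoffSum] using
        Finset.sum_le_card_nsmul (Finset.range n) _ 1 fun k _ => hg (T^[k] x)
    rw [birkhoffAverage, smul_eq_mul, inv_mul_le_iff₀ (by positivity), mul_one]
    exact hsum

lemma birkhoffAverage_one_sub {g : α → ℝ} {n : ℕ} (hn : n ≠ 0) (x : α) :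
    birkhoffAverage ℝ T (fun y => 1 - g y) n x = 1 - birkhoffAverage ℝ T g n x := by
  have hone : birkhoffAverage ℝ T (1 : α → ℝ) n = 1 :=
    birkhoffAverage_of_comp_eq ℝ rfl (Nat.cast_ne_zero.2 hn)
  change birkhoffAverage ℝ T (1 - g) n x = _
  rw [birkhoffAverage_sub, Pi.sub_apply, hone, Pi.sub_apply, Pi.one_apply]

lemma mul_sub_le_birkhoffSum {ψ : α → ℝ} {η : ℝ} {M : ℕ} (hψ : ∀ x, 0 ≤ ψ x) (hη : 0 ≤ η)
    (h : ∀ x, ∃ n ∈ Finset.Icc 1 M, η * n ≤ birkhoffSum T ψ n x) (N : ℕ) (x : α) :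
    η * (N - M) ≤ birkhoffSum T ψ N x := by
  induction N using Nat.strong_induction_on generalizing x with
  | _ N ih =>
  obtain ⟨n, hn, hnx⟩ := h x
  rw [Finset.mem_Icc] at hn
  rcases lt_or_ge N n with hNn | hnN
  · have hNM : (N : ℝ) ≤ M := by exact_mod_cast (hNn.trans_le hn.2).le
    exact (mul_nonpos_of_nonneg_of_nonpos hη (by linarith)).trans
      (Finset.sum_nonneg fun _ _ => hψ _)
  · obtain ⟨k, rfl⟩ := Nat.exists_eq_add_of_le hnN
    have hk := ih k (by omega) (T^[n] x)
    rw [birkhoffSum_add]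
    push_cast
    linarith

lemma eventually_exists_iterate_ne_zero_of_tendsto_birkhoffAverage {g : α → ℝ} {x : α} {c ρ : ℝ}
    (hc : 0 < c) (hρ : 0 < ρ) (h : Tendsto (fun n => birkhoffAverage ℝ T g n x) atTop (𝓝 c)) :
    ∀ᶠ l in atTop, ∃ m : ℕ, l ≤ m ∧ (m : ℝ) ≤ (1 + ρ) * l ∧ g (T^[m] x) ≠ 0 := by
  obtain ⟨a, hca, hac⟩ := exists_between (div_lt_self hc (by linarith : 1 < 1 + ρ))
  have ha : 0 < a := (div_pos hc (by linarith)).trans hca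
  have hcb : c < a * (1 + ρ) := (div_lt_iff₀ (by linarith)).1 hca
  obtain ⟨s, hs⟩ := eventually_atTop.1 <|
    (h.eventually (Ioo_mem_nhds hac hcb)).and (eventually_gt_atTop 0)
  have hsum : ∀ n ≥ s, a * n < birkhoffSum T g n x ∧ birkhoffSum T g n x < a * (1 + ρ) * n :=
    fun n hn => by
      obtain ⟨⟨hlo, hhi⟩, hn0⟩ := hs n hn
      have hpos : (0 : ℝ) < n := by exact_mod_cast hn0
      rw [birkhoffAverage, smul_eq_mul] at hlo hhi
      rw [lt_inv_mul_iff₀ hpos] at hlo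
      rw [inv_mul_lt_iff₀ hpos] at hhi
      constructor <;> linarith
  refine eventually_atTop.2 ⟨s, fun l hl => ?_⟩
  by_contra! hgap
  set M := ⌊(1 + ρ) * l⌋₊
  have hMl : (1 + ρ) * l < M + 1 := Nat.lt_floor_add_one _
  have hlM : l ≤ M := Nat.le_floor (by nlinarith [(Nat.cast_nonneg l : (0 : ℝ) ≤ l)])
  have hflat : birkhoffSum T g (M + 1) x = birkhoffSum T g l x := by
    obtain ⟨k, hk⟩ := Nat.exists_eq_add_of_le (show l ≤ M + 1 by omega)
    rw [hk, birkhoffSum_add, add_eq_left]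
    refine Finset.sum_eq_zero fun j hj => ?_
    rw [← Function.iterate_add_apply]
    have hj : j + l ≤ M := by rw [Finset.mem_range] at hj; omega
    exact hgap _ (by omega) ((Nat.cast_le.2 hj).trans (Nat.floor_le (by positivity)))
  have hup := (hsum l hl).2
  have hdown := (hsum (M + 1) (by omega)).1
  rw [hflat] at hdown
  push_cast at hdown
  nlinarith

variable [MeasurableSpace α]

lemma Measurable.birkhoffSum {M : Type*} [AddCommMonoid M] [MeasurableSpace M] [MeasurableAdd₂ M]
    {g : α → M} (hg : Measurable g) (hT : Measurable T) (n : ℕ) :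
    Measurable (birkhoffSum T g n) :=
  Finset.measurable_fun_sum _ fun k _ => hg.comp (hT.iterate k)

variable {μ : Measure α}

lemma MeasureTheory.MeasurePreserving.integrable_birkhoffSum {E : Type*} [NormedAddCommGroup E]
    {g : α → E} (hT : MeasurePreserving T μ μ) (hg : Integrable g μ) (n : ℕ) :
    Integrable (birkhoffSum T g n) μ :=
  integrable_finsetSum _ fun k _ => (hT.iterate k).integrable_comp_of_integrable hg

lemma MeasureTheory.MeasurePreserving.integral_birkhoffSum {E : Type*} [NormedAddCommGroup E]
    [NormedSpace ℝ E] {g : α → E} (hT : MeasurePreserving T μ μ) (hg : Integrable g μ) (n : ℕ) :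
    ∫ x, birkhoffSum T g n x ∂μ = n • ∫ x, g x ∂μ := by
  have hcomp : ∀ k, ∫ x, g (T^[k] x) ∂μ = ∫ x, g x ∂μ := fun k => by
    rw [← integral_map (hT.iterate k).aemeasurable
      (by rw [(hT.iterate k).map_eq]; exact hg.aestronglyMeasurable), (hT.iterate k).map_eq]
  simp only [birkhoffSum]
  rw [integral_finsetSum (f := fun k x => g (T^[k] x)) _
    fun k _ => (hT.iterate k).integrable_comp_of_integrable hg]
  simp [hcomp]

lemma integrable_of_nonneg_of_le_one [IsFiniteMeasure μ] {φ : α → ℝ} (hφm : Measurable φ)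
    (hφ0 : ∀ x, 0 ≤ φ x) (hφ1 : ∀ x, φ x ≤ 1) : Integrable φ μ :=
  .of_bound hφm.aestronglyMeasurable 1
    (.of_forall fun x => by rw [Real.norm_of_nonneg (hφ0 x)]; exact hφ1 x)

lemma le_integral_of_forall_exists_le_birkhoffSum [IsProbabilityMeasure μ]
    (hT : MeasurePreserving T μ μ) {ψ : α → ℝ} (hψ : ∀ x, 0 ≤ ψ x) (hψi : Integrable ψ μ)
    {η : ℝ} (hη : 0 ≤ η) {M : ℕ} (h : ∀ x, ∃ n ∈ Finset.Icc 1 M, η * n ≤ birkhoffSum T ψ n x) :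
    η ≤ ∫ x, ψ x ∂μ := by
  have hN : ∀ N : ℕ, η * (N - M) ≤ N * ∫ x, ψ x ∂μ := fun N =>
    calc η * (N - M) = ∫ _, η * (N - M) ∂μ := by simp
      _ ≤ ∫ x, birkhoffSum T ψ N x ∂μ :=
          integral_mono (integrable_const _) (hT.integrable_birkhoffSum hψi N)
            fun x => mul_sub_le_birkhoffSum hψ hη h N x
      _ = N * ∫ x, ψ x ∂μ := by rw [hT.integral_birkhoffSum hψi, nsmul_eq_mul]
  by_contra! hlt
  obtain ⟨N, hN'⟩ := exists_nat_gt (η * M / (η - ∫ x, ψ x ∂μ))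
  rw [div_lt_iff₀ (sub_pos.2 hlt)] at hN'
  linarith [hN N]

lemma le_integral_of_ae_exists_le_birkhoffSum [IsProbabilityMeasure μ]
    (hT : MeasurePreserving T μ μ) {φ : α → ℝ} (hφm : Measurable φ) (hφ : ∀ x, 0 ≤ φ x)
    (hφi : Integrable φ μ) {η : ℝ} (hη : 0 ≤ η)
    (h : ∀ᵐ x ∂μ, ∃ n, 1 ≤ n ∧ η * n ≤ birkhoffSum T φ n x) :
    η ≤ ∫ x, φ x ∂μ := by
  set D : ℕ → Set α := fun M => ⋃ n ∈ Finset.Icc 1 M, {x | η * n ≤ birkhoffSum T φ n x}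
  have hDm : ∀ M, MeasurableSet (D M) := fun M => Finset.measurableSet_biUnion _ fun n _ =>
    measurableSet_le measurable_const (hφm.birkhoffSum hT.measurable n)
  have hnull : μ (⋂ M, (D M)ᶜ) = 0 := by
    refine (measure_eq_zero_iff_ae_notMem (μ := μ)).2 ?_
    filter_upwards [h] with x ⟨n, hn, hnx⟩
    simp only [mem_iInter, mem_compl_iff, not_forall, not_not]
    exact ⟨n, mem_iUnion₂.2 ⟨n, Finset.mem_Icc.2 ⟨hn, le_rfl⟩, hnx⟩⟩
  have hDc : Tendsto (fun M => μ (D M)ᶜ) atTop (𝓝 0) :=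
    hnull ▸ tendsto_measure_iInter_atTop (fun M => (hDm M).compl.nullMeasurableSet)
      (fun M M' hMM' => compl_subset_compl.2 <| biUnion_subset_biUnion_left <| by
        exact_mod_cast Finset.Icc_subset_Icc_right hMM') ⟨0, measure_ne_top μ _⟩
  -- Off `D M` the observable is raised to `η`, so that every point starts a good block of
  -- length at most `M + 1`.
  have hbound : ∀ M, η ≤ ∫ x, φ x ∂μ + η * μ.real (D M)ᶜ := fun M => by
    have hbump : Integrable ((D M)ᶜ.indicator fun _ => η) μ :=
      (integrable_const η).indicator (hDm M).compl
    have hψ := le_integral_of_forall_exists_le_birkhoffSum (M := M + 1) hT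
      (ψ := φ + (D M)ᶜ.indicator fun _ => η)
      (fun x => add_nonneg (hφ x) (indicator_nonneg (fun _ _ => hη) x)) (hφi.add hbump) hη
      (fun x => ?_)
    · rwa [integral_add' hφi hbump, integral_indicator_const _ (hDm M).compl, smul_eq_mul,
        mul_comm] at hψ
    by_cases hx : x ∈ D M
    · obtain ⟨n, hn, hnx⟩ := mem_iUnion₂.1 hx
      refine ⟨n, Finset.Icc_subset_Icc_right M.le_succ hn, hnx.trans ?_⟩
      rw [birkhoffSum_add']
      exact le_add_of_nonneg_right <|
        Finset.sum_nonneg fun _ _ => indicator_nonneg (fun _ _ => hη) _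
    · refine ⟨1, by simp, ?_⟩
      simp [birkhoffSum_one, hx, hφ x]
  have hlim : Tendsto (fun M => ∫ x, φ x ∂μ + η * μ.real (D M)ᶜ) atTop
      (𝓝 (∫ x, φ x ∂μ + η * 0)) :=
    tendsto_const_nhds.add (tendsto_const_nhds.mul
      ((ENNReal.tendsto_toReal ENNReal.zero_ne_top).comp hDc))
  simpa using ge_of_tendsto' hlim hbound

lemma Ergodic.ae_limsup_birkhoffAverage_le [IsProbabilityMeasure μ] (hT : Ergodic T μ)
    {φ : α → ℝ} (hφm : Measurable φ) (hφ0 : ∀ x, 0 ≤ φ x) (hφ1 : ∀ x, φ x ≤ 1) :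
    ∀ᵐ x ∂μ, limsup (fun n => birkhoffAverage ℝ T φ n x) atTop ≤ ∫ x, φ x ∂μ := by
  set L : α → ℝ := fun x => limsup (fun n => birkhoffAverage ℝ T φ n x) atTop
  have hle : ∀ x, IsBoundedUnder (· ≤ ·) atTop (fun n => birkhoffAverage ℝ T φ n x) :=
    fun x => isBoundedUnder_of ⟨1, fun n => birkhoffAverage_le_one hφ1 n x⟩
  have hge : ∀ x, IsBoundedUnder (· ≥ ·) atTop (fun n => birkhoffAverage ℝ T φ n x) :=
    fun x => isBoundedUnder_of ⟨0, fun n => birkhoffAverage_nonneg hφ0 n x⟩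
  have hφb : Bornology.IsBounded (range φ) :=
    (Metric.isBounded_Icc (0 : ℝ) 1).subset (range_subset_iff.2 fun x => ⟨hφ0 x, hφ1 x⟩)
  have hLT : L ∘ T = L := funext fun x => show L (T x) = L x by
    have h := limsup_add_of_tendsto_zero (hle x) (hge x)
      (tendsto_birkhoffAverage_apply_sub_birkhoffAverage' ℝ hφb T x)
    simpa only [Pi.add_def, add_sub_cancel] using h
  have hLm : Measurable L :=
    Measurable.limsup fun n => (hφm.birkhoffSum hT.measurable n).const_smul (n : ℝ)⁻¹
  obtain ⟨G, hG⟩ := hT.ae_eq_const_of_ae_eq_comp₀ hLm.nullMeasurable (.of_eq hLT)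
  suffices hGφ : G ≤ ∫ x, φ x ∂μ by
    filter_upwards [hG] with x hx
    exact hx.trans_le hGφ
  by_contra! hlt
  obtain ⟨η, hφη, hηG⟩ := exists_between hlt
  have hφi : Integrable φ μ := integrable_of_nonneg_of_le_one hφm hφ0 hφ1
  refine hφη.not_ge (le_integral_of_ae_exists_le_birkhoffSum hT.toMeasurePreserving hφm hφ0 hφi
    ((integral_nonneg hφ0).trans hφη.le) ?_)
  filter_upwards [hG] with x hx
  have hfreq : ∃ᶠ n in atTop, η < birkhoffAverage ℝ T φ n x :=
    frequently_lt_of_lt_limsup (hge x).isCoboundedUnder_le (hηG.trans_eq hx.symm)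
  obtain ⟨n, hn, hn1⟩ := (hfreq.and_eventually (eventually_ge_atTop 1)).exists
  refine ⟨n, hn1, ?_⟩
  rw [birkhoffAverage, smul_eq_mul, lt_inv_mul_iff₀ (by positivity), mul_comm] at hn
  exact hn.le

theorem Ergodic.ae_tendsto_birkhoffAverage [IsProbabilityMeasure μ] (hT : Ergodic T μ)
    {φ : α → ℝ} (hφm : Measurable φ) (hφ0 : ∀ x, 0 ≤ φ x) (hφ1 : ∀ x, φ x ≤ 1) :
    ∀ᵐ x ∂μ, Tendsto (fun n => birkhoffAverage ℝ T φ n x) atTop (𝓝 (∫ x, φ x ∂μ)) := by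
  have hφi : Integrable φ μ := integrable_of_nonneg_of_le_one hφm hφ0 hφ1
  have hdual := hT.ae_limsup_birkhoffAverage_le (φ := fun x => 1 - φ x)
    (measurable_const.sub hφm) (fun x => sub_nonneg.2 (hφ1 x)) (fun x => sub_le_self _ (hφ0 x))
  rw [integral_sub (integrable_const 1) hφi, integral_const, probReal_univ, one_smul] at hdual
  filter_upwards [hT.ae_limsup_birkhoffAverage_le hφm hφ0 hφ1, hdual] with x hup hdown
  refine tendsto_order.2 ⟨fun a ha => ?_, fun b hb => eventually_lt_of_limsup_lt (hup.trans_lt hb)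
    (isBoundedUnder_of ⟨1, fun n => birkhoffAverage_le_one hφ1 n x⟩)⟩
  filter_upwards [eventually_lt_of_limsup_lt (hdown.trans_lt (sub_lt_sub_left ha 1))
      (isBoundedUnder_of ⟨1, fun n =>
        birkhoffAverage_le_one (fun x => sub_le_self _ (hφ0 x)) n x⟩),
    eventually_ne_atTop 0] with n hn hn0
  rw [birkhoffAverage_one_sub hn0] at hn
  linarith

end Birkhoff

theorem recurrence_in_proportional_window_general
    {X : Type*} [MetricSpace X] [MeasurableSpace X]
    (f : X ≃ₜ X) (μ : Measure X) [IsProbabilityMeasure μ] (hErg : Ergodic (⇑f) μ)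
    (Δ : Set X) (hΔm : MeasurableSet Δ) (hΔ : 0 < μ Δ)
    (ρ : ℝ) (hρ : 0 < ρ) :
    Tendsto
      (fun s : ℕ => μ {x ∈ Δ | ∀ l ≥ s, ∃ m : ℕ, l ≤ m ∧ (m : ℝ) ≤ (1 + ρ) * (l : ℝ) ∧
        (⇑f)^[m] x ∈ Δ})
      atTop (𝓝 (μ Δ)) := by
  set E : ℕ → Set X := fun s => {x ∈ Δ | ∀ l ≥ s, ∃ m : ℕ, l ≤ m ∧ (m : ℝ) ≤ (1 + ρ) * (l : ℝ) ∧
    (⇑f)^[m] x ∈ Δ}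
  have hE : Monotone E := fun s s' hss' x hx => ⟨hx.1, fun l hl => hx.2 l (hss'.trans hl)⟩
  have hfreq : ∫ x, Δ.indicator (fun _ => (1 : ℝ)) x ∂μ = μ.real Δ := by
    simp [integral_indicator_const _ hΔm]
  have hpos : 0 < μ.real Δ := ENNReal.toReal_pos hΔ.ne' (measure_ne_top μ Δ)
  have hunion : μ (⋃ s, E s) = μ Δ := by
    refine (measure_mono (iUnion_subset fun s => sep_subset _ _)).antisymm (measure_mono_ae ?_)
    filter_upwards [hErg.ae_tendsto_birkhoffAverage (measurable_const.indicator hΔm)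
      (indicator_nonneg fun _ _ => zero_le_one) (indicator_le_self' fun _ _ => zero_le_one)]
      with x hx hxΔ
    rw [hfreq] at hx
    obtain ⟨s, hs⟩ :=
      eventually_atTop.1 (eventually_exists_iterate_ne_zero_of_tendsto_birkhoffAverage hpos hρ hx)
    refine mem_iUnion.2 ⟨s, hxΔ, fun l hl => ?_⟩
    obtain ⟨m, hlm, hmρ, hm⟩ := hs l hl
    exact ⟨m, hlm, hmρ, by simpa using hm⟩
  exact hunion ▸ tendsto_measure_iUnion_atTop hE

/-- **Lemma 2.9.** Let `μ` be an ergodic invariant measure of the homeomorphism `f` of a compact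
metric space and `Δ` a measurable set with `μ(Δ) > 0`. For `ρ > 0` and `s ∈ ℕ`, let
`Δ_{s,ρ} = {x ∈ Δ | ∀ l ≥ s, ∃ m ∈ [l,(1+ρ)l], f^m(x) ∈ Δ}`. Then
`μ(Δ_{s,ρ}) → μ(Δ)` as `s → ∞`. -/
theorem recurrence_in_proportional_window
    {X : Type*} [MetricSpace X] [CompactSpace X] [MeasurableSpace X] [BorelSpace X]
    (f : X ≃ₜ X) (μ : Measure X) [IsProbabilityMeasure μ] (hErg : Ergodic (⇑f) μ)
    (Δ : Set X) (hΔm : MeasurableSet Δ) (hΔ : 0 < μ Δ)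
    (ρ : ℝ) (hρ : 0 < ρ) :
    Tendsto
      (fun s : ℕ => μ {x ∈ Δ | ∀ l ≥ s, ∃ m : ℕ, l ≤ m ∧ (m : ℝ) ≤ (1 + ρ) * (l : ℝ) ∧
        (⇑f)^[m] x ∈ Δ})
      atTop (𝓝 (μ Δ)) :=
  recurrence_in_proportional_window_general f μ hErg Δ hΔm hΔ ρ hρ
end

section
/- Let (X,d) be a compact metric space, f: X → X a homeomorphism with the entropy-dense property, and A: X → GL(m,ℝ) a continuous matrix function. If there exist two ergodic f-invariant measures with different maximal Lyapunov exponents with respect to A, then sup{ h_μ(f) : μ ergodic, χ_max(A,μ) > inf_{ν invariant} χ_max(A,ν) } = sup{ min{h_μ(f), h_ν(f)} : μ, ν ergodic with χ_max(A,μ) > χ_max(A,ν) }. -/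
/-!
Write `χ` for `mle f A` and `h` for `ksEnt f`. The inequality `≥` is immediate: if
`χ ν < χ μ` then `μ` is not Lyapunov-minimizing. For `≤`, let `μ` be ergodic and not minimizing,
so that some invariant `ν` has `χ ν < χ μ`, and let `t < h μ`. By Fekete's lemma `χ` is affine
on invariant measures, and the partition entropies are concave, so the mixture
`ω = ε ν + (1 - ε) μ` has `χ ω < χ μ` for all `ε ∈ (0, 1]` and `t < h ω` for small `ε`.
Being an infimum of weak*-continuous functions, `χ` is upper semicontinuous, so
`{χ < χ μ}` is a weak* neighbourhood of `ω`; entropy density yields an ergodic `μ'` in it with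
`t < h μ'`, and then `t < min (h μ) (h μ')`.
-/

open Filter MeasureTheory Set Topology Manifold
open scoped ENNReal NNReal

section MetricEntropy

variable {X : Type*} [MeasurableSpace X]

/-- Entropy `H_μ(⋁_{i=0}^{n-1} f^{-i} ξ)` of the `n`-th dynamical refinement of the finite
measurable partition `ξ = {P⁻¹(c)}_{c}`. -/
noncomputable def partHn (f : X → X) (μ : MeasureTheory.Measure X) {k : ℕ}
    (P : X → Fin k) (n : ℕ) : ℝ :=
  ∑ c : Fin n → Fin k,
    Real.negMulLog (μ {x | ∀ i : Fin n, P (f^[(i : ℕ)] x) = c i}).toReal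

/-- Kolmogorov–Sinai metric entropy `h_μ(f)`: the supremum over finite measurable partitions of
`lim_n (1/n) H_μ(⋁_{i<n} f^{-i} ξ) = inf_{n ≥ 1} (1/n) H_μ(⋁_{i<n} f^{-i} ξ)`. -/
noncomputable def ksEnt (f : X → X) (μ : MeasureTheory.Measure X) : EReal :=
  ⨆ (k : ℕ) (P : X → Fin k) (_ : Measurable P),
    (((⨅ n : ℕ, partHn f μ P (n + 1) / ((n : ℝ) + 1)) : ℝ) : EReal)

end MetricEntropy

section CocycleDefs

/-- Euclidean space `ℝ^m`. -/
abbrev Em (m : ℕ) := EuclideanSpace ℝ (Fin m)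

variable {X : Type*} {m : ℕ}

/-- The cocycle generated by the `GL(m,ℝ)`-valued function `A` over `f`:
`A(x,n) = A(f^{n-1}x) ⋯ A(f x) A(x)`. -/
noncomputable def cocycle (f : X → X) (A : X → (Em m ≃L[ℝ] Em m)) (x : X) :
    ℕ → (Em m →L[ℝ] Em m)
  | 0 => ContinuousLinearMap.id ℝ (Em m)
  | n + 1 => ((A (f^[n] x) : Em m →L[ℝ] Em m)).comp (cocycle f A x n)

/-- `A` is an `α`-Hölder continuous matrix function for some exponent `α > 0`
(in the operator norm). -/
def HolderMat [MetricSpace X] (A : X → (Em m ≃L[ℝ] Em m)) : Prop :=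
  ∃ α C : ℝ, 0 < α ∧ 0 ≤ C ∧ ∀ x y : X,
    ‖((A x : Em m →L[ℝ] Em m)) - ((A y : Em m →L[ℝ] Em m))‖ ≤ C * dist x y ^ α

/-- The set `MLI(A,f)` of Max-Lyapunov-irregular points: points where
`lim_n (1/n) log ‖A(x,n)‖` does not exist. -/
def MLIrr (f : X → X) (A : X → (Em m ≃L[ℝ] Em m)) : Set X :=
  {x | ¬ ∃ c : ℝ,
    Filter.Tendsto (fun n : ℕ => Real.log ‖cocycle f A x n‖ / n) Filter.atTop (nhds c)}

/-- The maximal Lyapunov exponent of an invariant measure: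
`χ_max(A,μ) = lim_n (1/n) ∫ log ‖A(x,n)‖ dμ = inf_{n ≥ 1} (1/n) ∫ log ‖A(x,n)‖ dμ`. -/
noncomputable def mle [MeasurableSpace X] (f : X → X) (A : X → (Em m ≃L[ℝ] Em m))
    (μ : MeasureTheory.Measure X) : ℝ :=
  ⨅ n : ℕ, (∫ x, Real.log ‖cocycle f A x (n + 1)‖ ∂μ) / ((n : ℝ) + 1)

/-- `μ` is a Lyapunov-minimizing (ergodic) measure for the cocycle `A`:
`χ_max(A,μ) = inf {χ_max(A,ν) : ν an f-invariant Borel probability measure}`. -/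
def IsLyapMin [MeasurableSpace X] (f : X → X) (A : X → (Em m ≃L[ℝ] Em m))
    (μ : MeasureTheory.Measure X) : Prop :=
  mle f A μ = sInf {r : ℝ | ∃ ν : MeasureTheory.Measure X,
    MeasureTheory.IsProbabilityMeasure ν ∧ MeasureTheory.MeasurePreserving f ν ν ∧
    r = mle f A ν}

end CocycleDefs

/-- `f` has the entropy-dense property: every invariant measure is a weak* limit of ergodic
measures with metric entropy approaching (from below) that of the given measure. -/
def EntropyDense {X : Type*} [MetricSpace X] [MeasurableSpace X] [OpensMeasurableSpace X]
    (f : X → X) : Prop :=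
  ∀ ν : ProbabilityMeasure X, MeasurePreserving f (ν : Measure X) (ν : Measure X) →
    ∀ G ∈ nhds ν, ∀ hstar : ℝ, (hstar : EReal) < ksEnt f (ν : Measure X) →
      ∃ μ : ProbabilityMeasure X, μ ∈ G ∧ Ergodic f (μ : Measure X) ∧
        (hstar : EReal) < ksEnt f (μ : Measure X)

section Cocycle

variable {X : Type*} {m : ℕ} (f : X → X) (A : X → (Em m ≃L[ℝ] Em m))

theorem cocycle_add (x : X) (p q : ℕ) :
    cocycle f A x (p + q) = (cocycle f A (f^[p] x) q).comp (cocycle f A x p) := by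
  induction q with
  | zero => rfl
  | succ q ih =>
    rw [← add_assoc, cocycle, cocycle, ih, ← Function.iterate_add_apply, add_comm q p]
    rfl

theorem injective_cocycle (x : X) (n : ℕ) : Function.Injective (cocycle f A x n) := by
  induction n with
  | zero => exact Function.injective_id
  | succ n ih => exact (A (f^[n] x)).injective.comp ih

theorem norm_cocycle_pos [Nontrivial (Em m)] (x : X) (n : ℕ) : 0 < ‖cocycle f A x n‖ := by
  obtain ⟨v, hv⟩ := exists_ne (0 : Em m)
  refine norm_pos_iff.2 fun h => hv (injective_cocycle f A x n ?_)
  simp [h]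

theorem antilipschitzWith_cocycle {K : ℝ≥0} (hK : ∀ x, ‖((A x).symm : Em m →L[ℝ] Em m)‖₊ ≤ K)
    (x : X) (n : ℕ) : AntilipschitzWith (K ^ n) (cocycle f A x n) := by
  induction n with
  | zero => exact AntilipschitzWith.id
  | succ n ih =>
    rw [pow_succ]
    have hA : AntilipschitzWith K (A (f^[n] x)) :=
      (((A (f^[n] x)).symm : Em m →L[ℝ] Em m).lipschitz.weaken (hK _)).to_rightInverse
        (A (f^[n] x)).left_inv
    exact hA.comp ih

theorem neg_mul_log_le_log_norm_cocycle [Nontrivial (Em m)] {K : ℝ≥0} (hK0 : 0 < K)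
    (hK : ∀ x, ‖((A x).symm : Em m →L[ℝ] Em m)‖₊ ≤ K) (x : X) (n : ℕ) :
    -(n * Real.log K) ≤ Real.log ‖cocycle f A x n‖ := by
  obtain ⟨v, hv⟩ := exists_ne (0 : Em m)
  have hKn : (0 : ℝ) < K ^ n := pow_pos (by exact_mod_cast hK0) n
  have hbound : 1 ≤ K ^ n * ‖cocycle f A x n‖ := by
    refine le_of_mul_le_mul_right ?_ (norm_pos_iff.2 hv)
    calc 1 * ‖v‖ ≤ K ^ n * ‖cocycle f A x n v‖ := by
          simpa using (cocycle f A x n).bound_of_antilipschitz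
            (antilipschitzWith_cocycle f A hK x n) v
      _ ≤ K ^ n * ‖cocycle f A x n‖ * ‖v‖ := by
          rw [mul_assoc]; gcongr; exact (cocycle f A x n).le_opNorm v
  have := Real.log_le_log one_pos hbound
  rw [Real.log_one, Real.log_mul hKn.ne' (norm_cocycle_pos f A x n).ne', Real.log_pow] at this
  linarith

theorem mle_eq_zero_of_subsingleton [Subsingleton (Em m)] [MeasurableSpace X] (μ : Measure X) :
    mle f A μ = 0 := by
  have h : ∀ x n, cocycle f A x n = 0 := fun _ _ => Subsingleton.elim _ _
  simp [mle, h]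

noncomputable def logNormIntegral [MeasurableSpace X] (ρ : Measure X) (n : ℕ) : ℝ :=
  ∫ x, Real.log ‖cocycle f A x n‖ ∂ρ

theorem mle_eq_iInf_logNormIntegral [MeasurableSpace X] (ρ : Measure X) :
    mle f A ρ = ⨅ n : ℕ, logNormIntegral f A ρ (n + 1) / ((n : ℝ) + 1) := rfl

end Cocycle

section Mixture

variable {X : Type*} [MeasurableSpace X]

noncomputable def mixture (ε : ℝ) (ν μ : Measure X) : Measure X :=
  ENNReal.ofReal ε • ν + ENNReal.ofReal (1 - ε) • μ

variable {ε : ℝ} {ν μ : Measure X}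

theorem mixture_apply_toReal [IsFiniteMeasure ν] [IsFiniteMeasure μ] (hε0 : 0 ≤ ε) (hε1 : ε ≤ 1)
    (s : Set X) : (mixture ε ν μ s).toReal = ε * (ν s).toReal + (1 - ε) * (μ s).toReal := by
  rw [mixture, Measure.add_apply, Measure.smul_apply, Measure.smul_apply, smul_eq_mul, smul_eq_mul,
    ENNReal.toReal_add (by finiteness) (by finiteness), ENNReal.toReal_mul, ENNReal.toReal_mul,
    ENNReal.toReal_ofReal hε0, ENNReal.toReal_ofReal (sub_nonneg.2 hε1)]

theorem isProbabilityMeasure_mixture [IsProbabilityMeasure ν] [IsProbabilityMeasure μ]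
    (hε0 : 0 ≤ ε) (hε1 : ε ≤ 1) : IsProbabilityMeasure (mixture ε ν μ) := by
  refine ⟨(ENNReal.toReal_eq_one_iff _).1 ?_⟩
  rw [mixture_apply_toReal hε0 hε1]
  simp

theorem MeasureTheory.MeasurePreserving.mixture {f : X → X} (hν : MeasurePreserving f ν ν)
    (hμ : MeasurePreserving f μ μ) (ε : ℝ) :
    MeasurePreserving f (mixture ε ν μ) (mixture ε ν μ) := by
  refine ⟨hν.measurable, ?_⟩
  rw [_root_.mixture, Measure.map_add _ _ hν.measurable, Measure.map_smul, Measure.map_smul,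
    hν.map_eq, hμ.map_eq]

theorem integral_mixture (hε0 : 0 ≤ ε) (hε1 : ε ≤ 1) {g : X → ℝ} (hν : Integrable g ν)
    (hμ : Integrable g μ) :
    ∫ x, g x ∂(mixture ε ν μ) = ε * ∫ x, g x ∂ν + (1 - ε) * ∫ x, g x ∂μ := by
  rw [mixture, integral_add_measure (hν.smul_measure ENNReal.ofReal_ne_top)
      (hμ.smul_measure ENNReal.ofReal_ne_top), integral_smul_measure, integral_smul_measure,
    ENNReal.toReal_ofReal hε0, ENNReal.toReal_ofReal (sub_nonneg.2 hε1), smul_eq_mul, smul_eq_mul]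

end Mixture

section LyapunovExponent

variable {X : Type*} [TopologicalSpace X] {m : ℕ} {f : X → X} {A : X → (Em m ≃L[ℝ] Em m)}

theorem continuous_cocycle (hf : Continuous f) (hA : Continuous fun x => (A x : Em m →L[ℝ] Em m))
    (n : ℕ) : Continuous fun x => cocycle f A x n := by
  induction n with
  | zero => exact continuous_const
  | succ n ih => exact (hA.comp (hf.iterate n)).clm_comp ih

theorem continuous_log_norm_cocycle [Nontrivial (Em m)] (hf : Continuous f)
    (hA : Continuous fun x => (A x : Em m →L[ℝ] Em m)) (n : ℕ) :
    Continuous fun x => Real.log ‖cocycle f A x n‖ :=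
  (continuous_cocycle hf hA n).norm.log fun x => (norm_cocycle_pos f A x n).ne'

theorem exists_forall_nnnorm_symm_le [CompactSpace X]
    (hA : Continuous fun x => (A x : Em m →L[ℝ] Em m)) :
    ∃ K : ℝ≥0, 1 ≤ K ∧ ∀ x, ‖((A x).symm : Em m →L[ℝ] Em m)‖₊ ≤ K := by
  have hsymm : Continuous fun x => ((A x).symm : Em m →L[ℝ] Em m) := by
    simp only [← ContinuousLinearMap.inverse_equiv]
    exact continuous_iff_continuousAt.2 fun x =>
      ContinuousAt.comp (g := ContinuousLinearMap.inverse)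
        (contDiffAt_map_inverse (n := 0) (A x)).continuousAt hA.continuousAt
  obtain ⟨K, hK⟩ := (isCompact_range hsymm.nnnorm).bddAbove
  exact ⟨max K 1, le_max_right _ _, fun x => (hK ⟨x, rfl⟩).trans (le_max_left _ _)⟩

theorem exists_neg_mul_le_log_norm_cocycle [CompactSpace X] [Nontrivial (Em m)]
    (hA : Continuous fun x => (A x : Em m →L[ℝ] Em m)) :
    ∃ c : ℝ, 0 ≤ c ∧ ∀ x n, -(n * c) ≤ Real.log ‖cocycle f A x n‖ := by
  obtain ⟨K, hK1, hK⟩ := exists_forall_nnnorm_symm_le hA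
  exact ⟨Real.log K, Real.log_nonneg (by exact_mod_cast hK1),
    neg_mul_log_le_log_norm_cocycle f A (zero_lt_one.trans_le hK1) hK⟩

variable [MeasurableSpace X] [OpensMeasurableSpace X] [CompactSpace X] [Nontrivial (Em m)]
  (hf : Continuous f) (hA : Continuous fun x => (A x : Em m →L[ℝ] Em m))
include hf hA

theorem integrable_log_norm_cocycle (ρ : Measure X) [IsFiniteMeasure ρ] (n : ℕ) :
    Integrable (fun x => Real.log ‖cocycle f A x n‖) ρ :=
  (continuous_log_norm_cocycle hf hA n).integrable_of_hasCompactSupport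
    (HasCompactSupport.of_compactSpace _)

theorem subadditive_logNormIntegral {ρ : Measure X} [IsProbabilityMeasure ρ]
    (hρ : MeasurePreserving f ρ ρ) : Subadditive (logNormIntegral f A ρ) := by
  intro p q
  have hsub : ∀ x, Real.log ‖cocycle f A x (p + q)‖ ≤
      Real.log ‖cocycle f A (f^[p] x) q‖ + Real.log ‖cocycle f A x p‖ := fun x => by
    rw [← Real.log_mul (norm_cocycle_pos f A _ q).ne' (norm_cocycle_pos f A x p).ne',
      cocycle_add]
    exact Real.log_le_log (cocycle_add f A x p q ▸ norm_cocycle_pos f A x (p + q))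
      (ContinuousLinearMap.opNorm_comp_le _ _)
  have hp := hρ.iterate p
  have hq := integrable_log_norm_cocycle hf hA ρ q
  have hshift : ∫ x, Real.log ‖cocycle f A (f^[p] x) q‖ ∂ρ = logNormIntegral f A ρ q := by
    calc _ = ∫ y, Real.log ‖cocycle f A y q‖ ∂(ρ.map f^[p]) :=
          (integral_map hp.measurable.aemeasurable
            (by rw [hp.map_eq]; exact hq.aestronglyMeasurable)).symm
      _ = _ := by rw [hp.map_eq, logNormIntegral]
  have hint : Integrable (fun x => Real.log ‖cocycle f A (f^[p] x) q‖) ρ :=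
    hp.integrable_comp_of_integrable hq
  calc logNormIntegral f A ρ (p + q)
      ≤ ∫ x, (Real.log ‖cocycle f A (f^[p] x) q‖ + Real.log ‖cocycle f A x p‖) ∂ρ :=
        integral_mono (integrable_log_norm_cocycle hf hA ρ _)
          (hint.add (integrable_log_norm_cocycle hf hA ρ p)) hsub
    _ = logNormIntegral f A ρ p + logNormIntegral f A ρ q := by
        rw [integral_add hint (integrable_log_norm_cocycle hf hA ρ p), hshift, add_comm]; rfl

theorem exists_forall_le_logNormIntegral_div :
    ∃ c : ℝ, ∀ (ρ : Measure X) [IsProbabilityMeasure ρ] (n : ℕ),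
      c ≤ logNormIntegral f A ρ n / n := by
  obtain ⟨c, hc0, hc⟩ := exists_neg_mul_le_log_norm_cocycle (f := f) hA
  refine ⟨-c, fun ρ _ n => ?_⟩
  rcases n.eq_zero_or_pos with rfl | hn
  · -- junk value: `a / 0 = 0`, whence the need for `0 ≤ c`
    simpa using hc0
  rw [le_div_iff₀ (by exact_mod_cast hn)]
  calc -c * n = ∫ _, -(n * c) ∂ρ := by simp [mul_comm]
    _ ≤ logNormIntegral f A ρ n :=
      integral_mono (integrable_const _) (integrable_log_norm_cocycle hf hA ρ n) (hc · n)

theorem exists_forall_le_mle :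
    ∃ c : ℝ, ∀ (ρ : Measure X) [IsProbabilityMeasure ρ], c ≤ mle f A ρ := by
  obtain ⟨c, hc⟩ := exists_forall_le_logNormIntegral_div hf hA
  exact ⟨c, fun ρ _ => le_ciInf fun n => by exact_mod_cast hc ρ (n + 1)⟩

theorem bddBelow_range_logNormIntegral_div (ρ : Measure X) [IsProbabilityMeasure ρ] :
    BddBelow (range fun n : ℕ => logNormIntegral f A ρ (n + 1) / ((n : ℝ) + 1)) := by
  obtain ⟨c, hc⟩ := exists_forall_le_logNormIntegral_div hf hA
  exact ⟨c, by rintro _ ⟨k, rfl⟩; exact_mod_cast hc ρ (k + 1)⟩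

theorem tendsto_logNormIntegral_div {ρ : Measure X} [IsProbabilityMeasure ρ]
    (hρ : MeasurePreserving f ρ ρ) :
    Tendsto (fun n => logNormIntegral f A ρ n / n) atTop (𝓝 (mle f A ρ)) := by
  have hsub := subadditive_logNormIntegral hf hA hρ
  obtain ⟨c, hc⟩ := exists_forall_le_logNormIntegral_div hf hA
  have hlim : hsub.lim = mle f A ρ := by
    have himage : (fun n : ℕ => logNormIntegral f A ρ n / n) '' Ici 1 =
        range fun n : ℕ => logNormIntegral f A ρ (n + 1) / ((n : ℝ) + 1) := by
      ext r
      constructor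
      · rintro ⟨n, hn, rfl⟩
        obtain ⟨k, rfl⟩ := Nat.exists_eq_add_of_le' hn
        exact ⟨k, by push_cast; rfl⟩
      · rintro ⟨k, rfl⟩
        exact ⟨k + 1, by simp, by push_cast; rfl⟩
    rw [Subadditive.lim, himage, mle_eq_iInf_logNormIntegral, iInf]
  exact hlim ▸ hsub.tendsto_lim ⟨c, by rintro _ ⟨n, rfl⟩; exact hc ρ n⟩

theorem mle_mixture {ν μ : Measure X} [IsProbabilityMeasure ν] [IsProbabilityMeasure μ]
    (hν : MeasurePreserving f ν ν) (hμ : MeasurePreserving f μ μ) {ε : ℝ} (hε0 : 0 ≤ ε)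
    (hε1 : ε ≤ 1) : mle f A (mixture ε ν μ) = ε * mle f A ν + (1 - ε) * mle f A μ := by
  have := isProbabilityMeasure_mixture (ν := ν) (μ := μ) hε0 hε1
  refine tendsto_nhds_unique (tendsto_logNormIntegral_div hf hA (hν.mixture hμ ε)) ?_
  refine (((tendsto_logNormIntegral_div hf hA hν).const_mul ε).add
    ((tendsto_logNormIntegral_div hf hA hμ).const_mul (1 - ε))).congr fun n => ?_
  simp only [logNormIntegral]
  rw [integral_mixture hε0 hε1 (integrable_log_norm_cocycle hf hA ν n)
    (integrable_log_norm_cocycle hf hA μ n)]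
  ring

theorem upperSemicontinuous_mle :
    UpperSemicontinuous fun ρ : ProbabilityMeasure X => mle f A ρ := by
  refine upperSemicontinuous_ciInf (fun ρ => bddBelow_range_logNormIntegral_div hf hA ρ) fun n => ?_
  have hcont : Continuous fun ρ : ProbabilityMeasure X => logNormIntegral f A ρ (n + 1) :=
    ProbabilityMeasure.continuous_integral_boundedContinuousFunction
      (BoundedContinuousFunction.mkOfCompact ⟨_, continuous_log_norm_cocycle hf hA (n + 1)⟩)
  exact (hcont.div_const _).upperSemicontinuous

end LyapunovExponent

section Entropy

variable {X : Type*} [MeasurableSpace X] (f : X → X) {k : ℕ} (P : X → Fin k)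

noncomputable def partEntropyRate (μ : Measure X) : ℝ :=
  ⨅ n : ℕ, partHn f μ P (n + 1) / ((n : ℝ) + 1)

theorem partEntropyRate_le_ksEnt (μ : Measure X) (hP : Measurable P) :
    (partEntropyRate f P μ : EReal) ≤ ksEnt f μ :=
  le_iSup_of_le k <| le_iSup_of_le P <| le_iSup_of_le hP le_rfl

theorem exists_lt_partEntropyRate_of_lt_ksEnt {μ : Measure X} {t : ℝ}
    (ht : (t : EReal) < ksEnt f μ) :
    ∃ (k : ℕ) (P : X → Fin k), Measurable P ∧ t < partEntropyRate f P μ := by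
  simpa only [ksEnt, partEntropyRate, lt_iSup_iff, EReal.coe_lt_coe_iff, exists_prop] using ht

theorem partHn_nonneg (μ : Measure X) [IsProbabilityMeasure μ] (n : ℕ) : 0 ≤ partHn f μ P n :=
  Finset.sum_nonneg fun _ _ => Real.negMulLog_nonneg ENNReal.toReal_nonneg
    (ENNReal.toReal_le_of_le_ofReal zero_le_one (by simpa using prob_le_one))

theorem partHn_mixture_ge {ν μ : Measure X} [IsProbabilityMeasure ν] [IsProbabilityMeasure μ]
    {ε : ℝ} (hε0 : 0 ≤ ε) (hε1 : ε ≤ 1) (n : ℕ) :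
    ε * partHn f ν P n + (1 - ε) * partHn f μ P n ≤ partHn f (mixture ε ν μ) P n := by
  simp only [partHn, Finset.mul_sum, ← Finset.sum_add_distrib, mixture_apply_toReal hε0 hε1]
  exact Finset.sum_le_sum fun c _ => by
    simpa using Real.concaveOn_negMulLog.2 (mem_Ici.2 ENNReal.toReal_nonneg)
      (mem_Ici.2 ENNReal.toReal_nonneg) hε0 (sub_nonneg.2 hε1) (add_sub_cancel ε 1)

theorem partEntropyRate_mixture_ge {ν μ : Measure X} [IsProbabilityMeasure ν]
    [IsProbabilityMeasure μ] {ε : ℝ} (hε0 : 0 ≤ ε) (hε1 : ε ≤ 1) :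
    (1 - ε) * partEntropyRate f P μ ≤ partEntropyRate f P (mixture ε ν μ) := by
  have hbdd : BddBelow (range fun n : ℕ => partHn f μ P (n + 1) / ((n : ℝ) + 1)) :=
    ⟨0, by rintro _ ⟨n, rfl⟩; exact div_nonneg (partHn_nonneg f P μ _) (by positivity)⟩
  refine le_ciInf fun n => ?_
  calc (1 - ε) * partEntropyRate f P μ
      ≤ (1 - ε) * (partHn f μ P (n + 1) / ((n : ℝ) + 1)) :=
        mul_le_mul_of_nonneg_left (ciInf_le hbdd n) (sub_nonneg.2 hε1)
    _ ≤ (ε * partHn f ν P (n + 1) + (1 - ε) * partHn f μ P (n + 1)) / ((n : ℝ) + 1) := by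
        rw [add_div, ← mul_div_assoc]
        exact le_add_of_nonneg_left
          (div_nonneg (mul_nonneg hε0 (partHn_nonneg f P ν _)) (by positivity))
    _ ≤ partHn f (mixture ε ν μ) P (n + 1) / ((n : ℝ) + 1) := by
        gcongr
        exact partHn_mixture_ge f P hε0 hε1 _

theorem eventually_lt_ksEnt_mixture (ν : Measure X) {μ : Measure X} [IsProbabilityMeasure ν]
    [IsProbabilityMeasure μ] {t : ℝ} (ht : (t : EReal) < ksEnt f μ) :
    ∀ᶠ ε in 𝓝[>] 0, (t : EReal) < ksEnt f (mixture ε ν μ) := by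
  obtain ⟨k, P, hP, ht⟩ := exists_lt_partEntropyRate_of_lt_ksEnt f ht
  have hlim : Tendsto (fun ε : ℝ => (1 - ε) * partEntropyRate f P μ) (𝓝[>] 0)
      (𝓝 (partEntropyRate f P μ)) := by
    have : Continuous fun ε : ℝ => (1 - ε) * partEntropyRate f P μ := by fun_prop
    simpa using (this.tendsto 0).mono_left nhdsWithin_le_nhds
  filter_upwards [hlim.eventually (lt_mem_nhds ht), Ioo_mem_nhdsGT zero_lt_one]
    with ε htε ⟨hε0, hε1⟩
  calc (t : EReal) < ((1 - ε) * partEntropyRate f P μ : ℝ) := EReal.coe_lt_coe_iff.2 htε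
    _ ≤ partEntropyRate f P (mixture ε ν μ) :=
        EReal.coe_le_coe_iff.2 (partEntropyRate_mixture_ge f P hε0.le hε1.le)
    _ ≤ ksEnt f (mixture ε ν μ) := partEntropyRate_le_ksEnt f P _ hP

end Entropy

theorem EntropyDense.exists_ergodic_mle_lt_of_lt_ksEnt {X : Type*} [MetricSpace X] [CompactSpace X]
    [MeasurableSpace X] [BorelSpace X] {m : ℕ} [Nontrivial (Em m)] {f : X → X}
    {A : X → (Em m ≃L[ℝ] Em m)} (hdense : EntropyDense f) (hf : Continuous f)
    (hA : Continuous fun x => (A x : Em m →L[ℝ] Em m)) {ν μ : Measure X} [IsProbabilityMeasure ν]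
    [IsProbabilityMeasure μ] (hν : MeasurePreserving f ν ν) (hμ : MeasurePreserving f μ μ)
    (hlt : mle f A ν < mle f A μ) {t : ℝ} (ht : (t : EReal) < ksEnt f μ) :
    ∃ μ' : ProbabilityMeasure X, Ergodic f μ' ∧ mle f A μ' < mle f A μ ∧
      (t : EReal) < ksEnt f μ' := by
  obtain ⟨ε, hent, hε0, hε1⟩ :=
    ((eventually_lt_ksEnt_mixture f ν ht).and (Ioo_mem_nhdsGT zero_lt_one)).exists
  have hω := isProbabilityMeasure_mixture (ν := ν) (μ := μ) hε0.le hε1.le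
  have hmle : mle f A (mixture ε ν μ) < mle f A μ := by
    rw [mle_mixture hf hA hν hμ hε0.le hε1.le]
    linarith [mul_lt_mul_of_pos_left hlt hε0]
  obtain ⟨μ', hμ', herg, hent'⟩ := hdense ⟨mixture ε ν μ, hω⟩ (hν.mixture hμ ε) _
    (upperSemicontinuous_mle hf hA _ _ hmle) t hent
  exact ⟨μ', herg, hμ', hent'⟩

/-- **Proposition 2.13 (2), first part.** Let `f` be a homeomorphism of a compact metric space
with the entropy-dense property and `A : X → GL(m,ℝ)` a continuous matrix function. If two
ergodic invariant measures have different maximal Lyapunov exponents w.r.t. `A`, then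
`sup {h_μ(f) : μ ergodic, χ_max(A,μ) > inf_ν χ_max(A,ν)}
  = sup {min{h_μ(f), h_ν(f)} : μ, ν ergodic, χ_max(A,μ) > χ_max(A,ν)}`. -/
theorem sup_entropy_not_minimizing_eq_sup_min_entropies
    {X : Type*} [MetricSpace X] [CompactSpace X] [MeasurableSpace X] [BorelSpace X] {m : ℕ}
    (f : X ≃ₜ X) (hdense : EntropyDense (⇑f))
    (A : X → (Em m ≃L[ℝ] Em m))
    (hA : Continuous fun x => ((A x : Em m →L[ℝ] Em m)))
    (hdiff : ∃ μ ν : Measure X, IsProbabilityMeasure μ ∧ IsProbabilityMeasure ν ∧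
      Ergodic (⇑f) μ ∧ Ergodic (⇑f) ν ∧ mle (⇑f) A μ ≠ mle (⇑f) A ν) :
    sSup {h : EReal | ∃ μ : Measure X, IsProbabilityMeasure μ ∧ Ergodic (⇑f) μ ∧
        sInf {r : ℝ | ∃ ν : Measure X, IsProbabilityMeasure ν ∧
          MeasurePreserving (⇑f) ν ν ∧ r = mle (⇑f) A ν} < mle (⇑f) A μ ∧
        h = ksEnt (⇑f) μ} =
    sSup {h : EReal | ∃ μ ν : Measure X, IsProbabilityMeasure μ ∧ IsProbabilityMeasure ν ∧
        Ergodic (⇑f) μ ∧ Ergodic (⇑f) ν ∧ mle (⇑f) A ν < mle (⇑f) A μ ∧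
        h = min (ksEnt (⇑f) μ) (ksEnt (⇑f) ν)} := by
  rcases subsingleton_or_nontrivial (Em m) with _ | _
  · obtain ⟨μ, ν, -, -, -, -, hne⟩ := hdiff
    exact absurd (by rw [mle_eq_zero_of_subsingleton, mle_eq_zero_of_subsingleton]) hne
  obtain ⟨c, hc⟩ := exists_forall_le_mle f.continuous hA
  apply le_antisymm
  · refine sSup_le ?_
    rintro _ ⟨μ, hμ, herg, hinf, rfl⟩
    obtain ⟨_, ⟨ν, hν, hνf, rfl⟩, hlt⟩ :=
      exists_lt_of_csInf_lt (by exact ⟨_, μ, hμ, herg.toMeasurePreserving, rfl⟩) hinf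
    refine EReal.ge_of_forall_gt_iff_ge.1 fun t ht => ?_
    obtain ⟨μ', herg', hlt', hent'⟩ := hdense.exists_ergodic_mle_lt_of_lt_ksEnt f.continuous hA
      hνf herg.toMeasurePreserving hlt ht
    exact (lt_min ht hent').le.trans (le_sSup ⟨μ, μ', hμ, μ'.2, herg, herg', hlt', rfl⟩)
  · refine sSup_le ?_
    rintro _ ⟨μ, ν, hμ, hν, herg, hergν, hlt, rfl⟩
    refine (min_le_left _ _).trans (le_sSup ?_)
    refine ⟨μ, hμ, herg, ?_, rfl⟩
    refine lt_of_le_of_lt (csInf_le ⟨c, ?_⟩ ⟨ν, hν, hergν.toMeasurePreserving, rfl⟩) hlt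
    rintro _ ⟨ρ, _, _, rfl⟩
    exact hc ρ
end

section
/- Let f and g be homeomorphisms of compact metric spaces which are topologically conjugate via h (so f = h^{-1} ∘ g ∘ h). Suppose g has the β-exponential shadowing property for some β > 0 and the inverse conjugacy h^{-1} is γ-Hölder continuous for some γ ∈ (0,1]. Then f has the βγ-exponential shadowing property. -/
open Filter MeasureTheory Set Topology Manifold
open scoped ENNReal NNReal

section ShadowingDefs

variable {X : Type*} [MetricSpace X]

/-- The cumulative times `c_i` associated with a sequence of block lengths `(n_i)_{i∈ℤ}`. -/
def csum (nseq : ℤ → ℕ) (i : ℤ) : ℤ :=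
  if 0 ≤ i then ∑ j ∈ Finset.range i.toNat, (nseq j : ℤ)
  else -∑ j ∈ Finset.range (-i).toNat, (nseq (i + j) : ℤ)

/-- `{x_i, n_i}_{i∈ℤ}` is a `δ`-pseudo-orbit for `f`: `d(f^{n_i}(x_i), x_{i+1}) < δ`. -/
def IsPseudoOrbit (f : X → X) (δ : ℝ) (x : ℤ → X) (nseq : ℤ → ℕ) : Prop :=
  (∀ i, 1 ≤ nseq i) ∧ ∀ i : ℤ, dist (f^[nseq i] (x i)) (x (i + 1)) < δ

/-- `p` is a `(τ,λ)`-shadowing point for the pseudo-orbit `{x_i, n_i}`: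
`d(f^{c_i+j}(p), f^j(x_i)) < τ e^{-λ min{j, n_i - j}}` for `0 ≤ j ≤ n_i - 1`, `i ∈ ℤ`. -/
def IsExpShadowed (f : X ≃ X) (τ lam : ℝ) (x : ℤ → X) (nseq : ℤ → ℕ) (p : X) : Prop :=
  ∀ i : ℤ, ∀ j < nseq i,
    dist ((f ^ (csum nseq i + (j : ℤ)) : X ≃ X) p) ((⇑f)^[j] (x i))
      < τ * Real.exp (-lam * ((min j (nseq i - j) : ℕ) : ℝ))

/-- The `λ`-exponential shadowing property. -/
def ExpShadowingWith (f : X ≃ X) (lam : ℝ) : Prop :=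
  ∀ τ > (0 : ℝ), ∃ δ > (0 : ℝ), ∀ (x : ℤ → X) (nseq : ℤ → ℕ),
    IsPseudoOrbit (⇑f) δ x nseq → ∃ p : X, IsExpShadowed f τ lam x nseq p

/-- The exponential shadowing property: `λ`-exponential shadowing for some `λ > 0`. -/
def ExpShadowing (f : X ≃ X) : Prop := ∃ lam > (0 : ℝ), ExpShadowingWith f lam

end ShadowingDefs

/-!
Transport everything through the conjugacy. Since `h` is uniformly continuous (`X` is compact),
`h` maps `δ`-pseudo-orbits of `f` to `δ'`-pseudo-orbits of `g`; if `q` exponentially shadows the image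
with error `τ' e^{-β m}`, then `h⁻¹ q` shadows the original one, and the Hölder bound turns the error
into `L (τ' e^{-β m})^γ = L τ'^γ e^{-βγ m}`; it remains to choose `τ'` with `L τ'^γ = τ`.
-/

open Function Equiv

lemma Equiv.Perm.zpow_apply_of_semiconj {X Y : Type*} (e : X ≃ Y) {f : Perm X} {g : Perm Y}
    (hfg : Semiconj e f g) (k : ℤ) (x : X) : e ((f ^ k) x) = (g ^ k) (e x) := by
  have hg : e.permCongrHom f = g := Equiv.ext fun y => by
    rw [permCongrHom_coe, permCongr_apply, hfg.eq, apply_symm_apply]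
  rw [← hg, ← map_zpow, permCongrHom_coe, permCongr_apply, symm_apply_apply]

section Transport

variable {X Y : Type*} [MetricSpace X] [MetricSpace Y]

lemma IsPseudoOrbit.map {f : X → X} {g : Y → Y} {h : X → Y} (hfg : Semiconj h f g)
    {δ ε : ℝ} (hh : ∀ a b, dist a b < δ → dist (h a) (h b) < ε) {x : ℤ → X} {nseq : ℤ → ℕ}
    (hx : IsPseudoOrbit f δ x nseq) : IsPseudoOrbit g ε (h ∘ x) nseq :=
  ⟨hx.1, fun i => by simpa [(hfg.iterate_right _).eq] using hh _ _ (hx.2 i)⟩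

lemma Real.rpow_lt_rpow_mul_exp {d τ β γ m : ℝ} (hd : 0 ≤ d) (hγ : 0 < γ)
    (hdτ : d < τ * Real.exp (-β * m)) : d ^ γ < τ ^ γ * Real.exp (-(β * γ) * m) := by
  have hτ : 0 ≤ τ := nonneg_of_mul_nonneg_left (hd.trans hdτ.le) (Real.exp_pos _)
  calc d ^ γ < (τ * Real.exp (-β * m)) ^ γ := Real.rpow_lt_rpow hd hdτ hγ
    _ = τ ^ γ * Real.exp (-(β * γ) * m) := by
        rw [Real.mul_rpow hτ (Real.exp_nonneg _), ← Real.exp_mul]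
        ring_nf

lemma IsExpShadowed.map_holder {f : Perm X} {g : Perm Y} (e : Y ≃ X) (hgf : Semiconj e g f)
    {L γ τ β : ℝ} (hL : 0 < L) (hγ : 0 < γ)
    (he : ∀ y y', dist (e y) (e y') ≤ L * dist y y' ^ γ)
    {y : ℤ → Y} {nseq : ℤ → ℕ} {q : Y} (hq : IsExpShadowed g τ β y nseq q) :
    IsExpShadowed f (L * τ ^ γ) (β * γ) (e ∘ y) nseq (e q) := by
  intro i j hj
  rw [comp_apply, ← (hgf.iterate_right j).eq, ← Perm.zpow_apply_of_semiconj e hgf, mul_assoc]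
  exact (he _ _).trans_lt <|
    mul_lt_mul_of_pos_left (Real.rpow_lt_rpow_mul_exp dist_nonneg hγ (hq i j hj)) hL

end Transport

theorem expShadowing_of_conjugacy_holder_inverse_general
    {X Y : Type*} [MetricSpace X] [CompactSpace X] [MetricSpace Y]
    (f : X ≃ₜ X) (g : Y ≃ₜ Y) (h : X ≃ₜ Y)
    (hconj : ∀ x : X, h (f x) = g (h x))
    (β : ℝ) (hg : ExpShadowingWith g.toEquiv β)
    (γ : ℝ) (hγ0 : 0 < γ)
    (hHolder : ∃ L > (0 : ℝ), ∀ y y' : Y, dist (h.symm y) (h.symm y') ≤ L * dist y y' ^ γ) :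
    ExpShadowingWith f.toEquiv (β * γ) := by
  intro τ hτ
  obtain ⟨L, hL, hHolder⟩ := hHolder
  set τ' := (τ / L) ^ γ⁻¹
  have hτ' : L * τ' ^ γ = τ := by
    rw [Real.rpow_inv_rpow (by positivity) hγ0.ne']
    field_simp
  obtain ⟨δ', hδ', hshadow⟩ := hg τ' (by positivity)
  obtain ⟨δ, hδ, hδh⟩ := Metric.uniformContinuous_iff.mp
    (CompactSpace.uniformContinuous_of_continuous h.continuous) δ' hδ'
  refine ⟨δ, hδ, fun x nseq hx => ?_⟩
  obtain ⟨q, hq⟩ := hshadow (h ∘ x) nseq (hx.map hconj hδh)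
  have hinv : Semiconj h.symm g f :=
    (show Semiconj h f g from hconj).inverse_left h.symm_apply_apply h.apply_symm_apply
  refine ⟨h.symm q, ?_⟩
  simpa [hτ', comp_def] using hq.map_holder h.symm.toEquiv hinv hL hγ0 hHolder

/-- **Remark 2.10.** If `f` is topologically conjugate to a homeomorphism `g` having the
`β`-exponential shadowing property and the inverse conjugacy is `γ`-Hölder continuous, then `f`
has the `βγ`-exponential shadowing property. -/
theorem expShadowing_of_conjugacy_holder_inverse
    {X Y : Type*} [MetricSpace X] [CompactSpace X] [MetricSpace Y] [CompactSpace Y]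
    (f : X ≃ₜ X) (g : Y ≃ₜ Y) (h : X ≃ₜ Y)
    (hconj : ∀ x : X, h (f x) = g (h x))
    (β : ℝ) (hβ : 0 < β) (hg : ExpShadowingWith g.toEquiv β)
    (γ : ℝ) (hγ0 : 0 < γ) (hγ1 : γ ≤ 1)
    (hHolder : ∃ L > (0 : ℝ), ∀ y y' : Y, dist (h.symm y) (h.symm y') ≤ L * dist y y' ^ γ) :
    ExpShadowingWith f.toEquiv (β * γ) :=
  expShadowing_of_conjugacy_holder_inverse_general f g h hconj β hg γ hγ0 hHolder
end
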